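/- arXiv:1306.3867 — 4 statements merged into one kernel-verified Lean document; each statement's English description precedes it below -/
import Mathlib

section
/- Let M be a symmetric integer n×n matrix (n ≥ 1) that is not copositive, i.e. there exists x ∈ ℝⁿ with nonnegative entries such that xᵀMx < 0. Let L = Σ_{1≤i≤j≤n} (⌈log₂(|m_ij|+1)⌉ + 1) be the binary encoding length of M and let d = max_{i,j} |m_ij|. Then there exists a rational vector y ∈ ℚⁿ with nonnegative entries such that yᵀMy < 0 and every coordinate of y has the form a_j/(4dn²) for some natural number a_j with a_j ≤ 4dn²·2^{2L−1} + 1. -/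
open Matrix Finset

/-- Binary encoding length of a symmetric integer matrix:
`L = Σ_{1 ≤ i ≤ j ≤ n} (⌈log₂(|m_ij|+1)⌉ + 1)`. -/
def encodingLength {n : ℕ} (M : Matrix (Fin n) (Fin n) ℤ) : ℕ :=
  ∑ i : Fin n, ∑ j ∈ Finset.univ.filter (fun j => i ≤ j),
    (Nat.clog 2 ((M i j).natAbs + 1) + 1)

/-- The largest absolute value of an entry of an integer matrix. -/
def maxAbs {n : ℕ} (M : Matrix (Fin n) (Fin n) ℤ) : ℕ :=
  Finset.univ.sup fun p : Fin n × Fin n => (M p.1 p.2).natAbs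

/-!
Minimize `xᵀMx` over the standard simplex and take a minimizer `w` of smallest support `S`.
By the first-order conditions `(Mw)ᵢ` equals the minimum `λ < 0` for every `i ∈ S`, and the
minimality of the support makes the linear system `(Mv)ᵢ = τ (i ∈ S)`, `vᵢ = 0 (i ∉ S)`,
`∑ vᵢ = 1` nonsingular. Its solution is `(w, λ)`, so by Cramer's rule `λ` is an integer divided
by a determinant bounded by `(n+1)! ∏ (|mᵢⱼ| + 1) ≤ 2^(2L-1) =: R`, whence `R λ ≤ -1`.
Then `(R w)ᵀ M (R w) ≤ -R`, and rounding the coordinates of `R w` down to multiples of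
`1 / (4 d n²)` changes the form by at most `R / 2`.
-/

open scoped Nat

namespace Matrix

variable {ι R : Type*} [Fintype ι]

theorem IsSymm.dotProduct_mulVec_comm [CommSemiring R] {A : Matrix ι ι R} (hA : A.IsSymm)
    (x y : ι → R) : y ⬝ᵥ A *ᵥ x = x ⬝ᵥ A *ᵥ y := by
  rw [dotProduct_mulVec, ← mulVec_transpose, hA.eq, dotProduct_comm]

theorem IsSymm.dotProduct_mulVec_add_smul [CommRing R] {A : Matrix ι ι R} (hA : A.IsSymm)
    (x u : ι → R) (t : R) :
    (x + t • u) ⬝ᵥ A *ᵥ (x + t • u) =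
      x ⬝ᵥ A *ᵥ x + 2 * t * (x ⬝ᵥ A *ᵥ u) + t ^ 2 * (u ⬝ᵥ A *ᵥ u) := by
  simp only [mulVec_add, mulVec_smul, add_dotProduct, dotProduct_add, smul_dotProduct,
    dotProduct_smul, hA.dotProduct_mulVec_comm u x, smul_eq_mul]
  ring

theorem dotProduct_eq_mul_sum_of_ne_zero [CommSemiring R] {u f : ι → R} {c : R}
    (h : ∀ k, u k ≠ 0 → f k = c) : u ⬝ᵥ f = c * ∑ k, u k := by
  rw [dotProduct, Finset.mul_sum]
  refine Finset.sum_congr rfl fun k _ => ?_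
  by_cases hk : u k = 0
  · simp [hk]
  · rw [h k hk, mul_comm]

theorem abs_dotProduct_mulVec_le {A : Matrix ι ι ℝ} {x y : ι → ℝ} {d a b : ℝ}
    (hd : ∀ i j, |A i j| ≤ d) (hx : ∀ i, |x i| ≤ a) (hy : ∀ j, |y j| ≤ b) :
    |x ⬝ᵥ A *ᵥ y| ≤ Fintype.card ι ^ 2 * (d * (a * b)) := by
  have hterm (i j : ι) : |x i * (A i j * y j)| ≤ d * (a * b) := by
    rw [abs_mul, abs_mul]
    refine (mul_le_mul (hx i) (mul_le_mul (hd i j) (hy j) (abs_nonneg _)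
      ((abs_nonneg _).trans (hd i j))) (by positivity) ((abs_nonneg _).trans (hx i))).trans_eq ?_
    ring
  calc |x ⬝ᵥ A *ᵥ y| = |∑ i, ∑ j, x i * (A i j * y j)| := by
        simp only [dotProduct, mulVec, Finset.mul_sum]
    _ ≤ ∑ i, ∑ j, |x i * (A i j * y j)| :=
        (Finset.abs_sum_le_sum_abs _ _).trans
          (Finset.sum_le_sum fun i _ => Finset.abs_sum_le_sum_abs _ _)
    _ ≤ ∑ _i : ι, ∑ _j : ι, d * (a * b) := by gcongr with i _ j; exact hterm i j
    _ = Fintype.card ι ^ 2 * (d * (a * b)) := by simp [sq, mul_assoc]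

theorem abs_dotProduct_mulVec_sub_le {A : Matrix ι ι ℝ} {x y : ι → ℝ} {d r ε : ℝ}
    (hd : ∀ i j, |A i j| ≤ d) (hx : ∀ i, |x i| ≤ r) (hy : ∀ i, |y i| ≤ r)
    (hxy : ∀ i, |x i - y i| ≤ ε) :
    |x ⬝ᵥ A *ᵥ x - y ⬝ᵥ A *ᵥ y| ≤ Fintype.card ι ^ 2 * (d * (2 * r * ε)) := by
  have hsplit : x ⬝ᵥ A *ᵥ x - y ⬝ᵥ A *ᵥ y = (x - y) ⬝ᵥ A *ᵥ x + y ⬝ᵥ A *ᵥ (x - y) := by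
    simp only [sub_dotProduct, mulVec_sub, dotProduct_sub]
    ring
  have h₁ := abs_dotProduct_mulVec_le (x := x - y) hd (fun i => hxy i) hx
  have h₂ := abs_dotProduct_mulVec_le (y := x - y) hd hy (fun i => hxy i)
  rw [hsplit]
  calc _ ≤ _ := abs_add_le _ _
    _ ≤ _ := add_le_add h₁ h₂
    _ = _ := by ring

end Matrix

section StdSimplex

variable {ι : Type*} [Fintype ι]

theorem add_smul_mem_stdSimplex {w u : ι → ℝ} {t : ℝ} (hw : w ∈ stdSimplex ℝ ι)
    (hu : ∑ k, u k = 0) (hnonneg : ∀ k, 0 ≤ w k + t * u k) : w + t • u ∈ stdSimplex ℝ ι :=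
  ⟨fun k => hnonneg k, by
    simp only [Pi.add_apply, Pi.smul_apply, smul_eq_mul, Finset.sum_add_distrib,
      ← Finset.mul_sum, hw.2, hu, mul_zero, add_zero]⟩

theorem exists_add_smul_mem_stdSimplex_card_support_lt {w u : ι → ℝ}
    (hw : w ∈ stdSimplex ℝ ι) (hu₀ : u ≠ 0) (hu : ∑ k, u k = 0)
    (hsupp : ∀ k, w k = 0 → u k = 0) :
    ∃ s : ℝ, w + s • u ∈ stdSimplex ℝ ι ∧ #{k | (w + s • u) k ≠ 0} < #{k | w k ≠ 0} := by
  obtain ⟨k, hk⟩ : ∃ k, u k < 0 := by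
    by_contra! h
    exact hu₀ (funext fun k =>
      (Finset.sum_eq_zero_iff_of_nonneg fun k _ => h k).1 hu k (mem_univ k))
  have hneg : ({k | u k < 0} : Finset ι).Nonempty := ⟨k, by simpa using hk⟩
  -- Move from `w` along `u` until the first coordinate hits zero.
  obtain ⟨k₀, hk₀, hk₀min⟩ := Finset.exists_min_image _ (fun k => w k / -u k) hneg
  have huk₀ : u k₀ < 0 := (Finset.mem_filter.1 hk₀).2
  set s := w k₀ / -u k₀
  have hs : 0 ≤ s := div_nonneg (hw.1 k₀) (by linarith)
  have hk₀zero : w k₀ + s * u k₀ = 0 := by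
    have := huk₀.ne
    simp only [s]; field_simp; ring
  refine ⟨s, add_smul_mem_stdSimplex hw hu fun k => ?_, Finset.card_lt_card ?_⟩
  · rcases le_or_gt 0 (u k) with huk | huk
    · exact add_nonneg (hw.1 k) (mul_nonneg hs huk)
    · have := hk₀min k (by simpa using huk)
      rw [le_div_iff₀ (by linarith)] at this
      linarith
  · refine Finset.ssubset_iff_of_subset (fun k hk => ?_) |>.2 ⟨k₀, ?_, ?_⟩
    · simp only [Finset.mem_filter, Finset.mem_univ, true_and] at hk ⊢
      intro hwk
      simp [hwk, hsupp k hwk] at hk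
    · simpa using fun h => huk₀.ne (hsupp k₀ h)
    · simpa using hk₀zero

theorem exists_minimalFor_card_support_isMinOn_stdSimplex [Nonempty ι]
    {f : (ι → ℝ) → ℝ} (hf : Continuous f) :
    ∃ w, MinimalFor (fun v => v ∈ stdSimplex ℝ ι ∧ IsMinOn f (stdSimplex ℝ ι) v)
      (fun v => #{k | v k ≠ 0}) w := by
  classical
  obtain ⟨w₀, hw₀, hmin⟩ := (isCompact_stdSimplex ℝ ι).exists_isMinOn
    ⟨_, single_mem_stdSimplex ℝ (Classical.arbitrary ι)⟩ hf.continuousOn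
  exact exists_minimalFor_of_wellFoundedLT _ _ ⟨w₀, hw₀, hmin⟩

end StdSimplex

theorem nonneg_of_forall_mem_Ioc_add_mul_nonneg {a b s : ℝ} (hs : 0 < s)
    (h : ∀ t ∈ Set.Ioc 0 s, 0 ≤ a + t * b) : 0 ≤ a := by
  have hlim : Filter.Tendsto (fun t => a + t * b) (nhdsWithin 0 (Set.Ioi 0)) (nhds a) := by
    exact ((continuous_const.add (continuous_id.mul continuous_const)).tendsto' 0 a
      (by simp)).mono_left nhdsWithin_le_nhds
  exact ge_of_tendsto hlim (Filter.mem_of_superset (Ioc_mem_nhdsGT hs) h)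

namespace Matrix.IsSymm

variable {ι : Type*} [Fintype ι] {A : Matrix ι ι ℝ} {w : ι → ℝ}

theorem mulVec_le_of_isMinOn_stdSimplex (hA : A.IsSymm) (hw : w ∈ stdSimplex ℝ ι)
    (hmin : IsMinOn (fun v => v ⬝ᵥ A *ᵥ v) (stdSimplex ℝ ι) w) {i : ι} (hi : w i ≠ 0)
    (j : ι) : (A *ᵥ w) i ≤ (A *ᵥ w) j := by
  classical
  -- Shift a small mass `t` from coordinate `i` to coordinate `j`.
  set u : ι → ℝ := Pi.single j 1 - Pi.single i 1
  have hu : ∑ k, u k = 0 := by simp [u, Finset.sum_sub_distrib]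
  have hwu : w ⬝ᵥ A *ᵥ u = (A *ᵥ w) j - (A *ᵥ w) i := by
    rw [← hA.dotProduct_mulVec_comm, sub_dotProduct, single_dotProduct, single_dotProduct,
      one_mul, one_mul]
  have hstep : ∀ t ∈ Set.Ioc 0 (w i), 0 ≤ 2 * (w ⬝ᵥ A *ᵥ u) + t * (u ⬝ᵥ A *ᵥ u) := by
    rintro t ⟨ht, hti⟩
    have hmem : w + t • u ∈ stdSimplex ℝ ι := add_smul_mem_stdSimplex hw hu fun k => by
      rcases eq_or_ne k i with rfl | hk
      · rcases eq_or_ne k j with rfl | hkj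
        · simpa [u] using hw.1 k
        · simp [u, hkj.symm]; linarith
      · have : 0 ≤ t * (Pi.single j (1 : ℝ) : ι → ℝ) k :=
          mul_nonneg ht.le ((Pi.single_nonneg.2 zero_le_one : (0 : ι → ℝ) ≤ _) k)
        simp only [u, Pi.sub_apply, Pi.single_eq_of_ne hk, sub_zero]
        linarith [hw.1 k]
    have := hmin hmem
    simp only [Set.mem_ofPred_eq, hA.dotProduct_mulVec_add_smul] at this
    have : 0 ≤ t * (2 * (w ⬝ᵥ A *ᵥ u) + t * (u ⬝ᵥ A *ᵥ u)) := by nlinarith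
    exact nonneg_of_mul_nonneg_right (by linarith) ht
  have := nonneg_of_forall_mem_Ioc_add_mul_nonneg ((hw.1 i).lt_of_ne' hi) hstep
  linarith

theorem mulVec_eq_of_isMinOn_stdSimplex (hA : A.IsSymm) (hw : w ∈ stdSimplex ℝ ι)
    (hmin : IsMinOn (fun v => v ⬝ᵥ A *ᵥ v) (stdSimplex ℝ ι) w) {i : ι} (hi : w i ≠ 0) :
    (A *ᵥ w) i = w ⬝ᵥ A *ᵥ w := by
  have hsum : ∑ k, w k * (A *ᵥ w) i = (A *ᵥ w) i := by rw [← Finset.sum_mul, hw.2, one_mul]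
  refine le_antisymm ?_ ?_ <;> rw [← hsum, dotProduct]
  · gcongr with k
    · exact hw.1 k
    · exact hA.mulVec_le_of_isMinOn_stdSimplex hw hmin hi k
  · refine Finset.sum_le_sum fun k _ => ?_
    by_cases hk : w k = 0
    · simp [hk]
    · exact mul_le_mul_of_nonneg_left
        (hA.mulVec_le_of_isMinOn_stdSimplex hw hmin hk i) (hw.1 k)

end Matrix.IsSymm

namespace Matrix

variable {ι R : Type*} [DecidableEq ι] [Ring R]

/-- The matrix of the linear system `(M v) i = τ` for `i ∈ S`, `v i = 0` for `i ∉ S`,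
`∑ i, v i = 1`, in the unknowns `(v, τ)`. -/
def bordered (M : Matrix ι ι R) (S : Finset ι) : Matrix (ι ⊕ Unit) (ι ⊕ Unit) R :=
  fromBlocks (of fun i j => if i ∈ S then M i j else (1 : Matrix ι ι R) i j)
    (of fun i _ => if i ∈ S then -1 else 0) (of fun _ _ => 1) 0

theorem bordered_mulVec_inl [Fintype ι] (M : Matrix ι ι R) (S : Finset ι) (v : ι ⊕ Unit → R)
    (i : ι) : (bordered M S *ᵥ v) (Sum.inl i) =
      if i ∈ S then (M *ᵥ (v ∘ Sum.inl)) i - v (Sum.inr ()) else v (Sum.inl i) := by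
  split_ifs with hi <;> simp [bordered, hi, mulVec, dotProduct, one_apply, sub_eq_add_neg]

theorem bordered_mulVec_inr [Fintype ι] (M : Matrix ι ι R) (S : Finset ι) (v : ι ⊕ Unit → R) :
    (bordered M S *ᵥ v) (Sum.inr ()) = ∑ i, v (Sum.inl i) := by
  simp [bordered, mulVec, dotProduct]

theorem bordered_map {R' : Type*} [Ring R'] (f : R →+* R') (M : Matrix ι ι R) (S : Finset ι) :
    (bordered M S).map f = bordered (M.map f) S := by
  ext (i | i) (j | j) <;> simp [bordered, one_apply, apply_ite f]

end Matrix

namespace Matrix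

open Equiv in
theorem det_le_factorial_mul_prod {n R S : Type*} [Fintype n] [DecidableEq n] [CommRing R]
    [Nontrivial R] [CommRing S] [LinearOrder S] [IsStrictOrderedRing S] {A : Matrix n n R}
    {abv : AbsoluteValue R S} {x : n → S} (hx : ∀ i j, abv (A i j) ≤ x i) :
    abv A.det ≤ (Fintype.card n).factorial • ∏ i, x i :=
  calc
    abv A.det ≤ ∑ σ : Perm n, abv (Perm.sign σ • ∏ i, A (σ i) i) := by
      rw [det_apply]; exact abv.sum_le _ _
    _ = ∑ σ : Perm n, ∏ i, abv (A (σ i) i) :=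
      Finset.sum_congr rfl fun σ _ => by rw [abv.map_units_int_smul, abv.map_prod]
    _ ≤ ∑ σ : Perm n, ∏ i, x (σ i) := by
      gcongr with σ _ i
      exact hx _ _
    _ = (Fintype.card n).factorial • ∏ i, x i := by
      simp only [Equiv.prod_comp, Finset.sum_const, Finset.card_univ, Fintype.card_perm]

theorem map_det_smul_eq_comp_adjugate_mulVec {ι R S : Type*} [Fintype ι] [DecidableEq ι]
    [CommRing R] [CommRing S] (f : R →+* S) (A : Matrix ι ι R) {v : ι → S} {b : ι → R}
    (h : A.map f *ᵥ v = f ∘ b) : f A.det • v = f ∘ (adjugate A *ᵥ b) := by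
  funext k
  have hadj : adjugate (A.map f) = (adjugate A).map f := (f.map_adjugate A).symm
  rw [Function.comp_apply, RingHom.map_mulVec, ← hadj, ← h, mulVec_mulVec, adjugate_mul,
    smul_mulVec, one_mulVec, RingHom.map_det]
  rfl

theorem abs_det_bordered_le {ι : Type*} [Fintype ι] [DecidableEq ι] (M : Matrix ι ι ℤ)
    (S : Finset ι) : |(bordered M S).det| ≤
      ((Fintype.card ι + 1)! * ∏ i, ∏ j, ((M i j).natAbs + 1) : ℕ) := by
  set P : ι → ℕ := fun i => ∏ j, ((M i j).natAbs + 1)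
  have hP (i j : ι) : (M i j).natAbs + 1 ≤ P i :=
    Finset.single_le_prod' (f := fun j => (M i j).natAbs + 1) (fun j _ => Nat.le_add_left 1 _)
      (mem_univ j)
  have hP₁ (i : ι) : (1 : ℤ) ≤ P i := by
    exact_mod_cast (Nat.le_add_left 1 _).trans (hP i i)
  have hx : ∀ r q, |bordered M S r q| ≤ Sum.elim (fun i => (P i : ℤ)) 1 r := by
    rintro (i | ⟨⟩) (j | ⟨⟩)
    · simp only [bordered, fromBlocks_apply₁₁, of_apply, Sum.elim_inl, one_apply]
      split_ifs
      · rw [Int.abs_eq_natAbs]; exact_mod_cast (Nat.le_add_right _ 1).trans (hP i j)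
      · simpa using hP₁ i
      · simp
    · simp only [bordered, fromBlocks_apply₁₂, of_apply, Sum.elim_inl]
      split_ifs
      · simpa using hP₁ i
      · simp
    · simp [bordered]
    · simp [bordered]
  have := det_le_factorial_mul_prod (abv := AbsoluteValue.abs) hx
  simpa [Fintype.prod_sum_type, P] using this

end Matrix

namespace Matrix.IsSymm

variable {ι : Type*} [Fintype ι] [DecidableEq ι] {A : Matrix ι ι ℝ} {w : ι → ℝ}

theorem det_bordered_ne_zero (hA : A.IsSymm)
    (hw : MinimalFor (fun v => v ∈ stdSimplex ℝ ι ∧ IsMinOn (fun v => v ⬝ᵥ A *ᵥ v)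
      (stdSimplex ℝ ι) v) (fun v => #{k | v k ≠ 0}) w) :
    (bordered A {k | w k ≠ 0}).det ≠ 0 := by
  obtain ⟨⟨hwΔ, hmin⟩, hsmall⟩ := hw
  intro hdet
  obtain ⟨v, hv₀, hv⟩ := exists_mulVec_eq_zero_iff.2 hdet
  set u : ι → ℝ := v ∘ Sum.inl
  have hrow (i : ι) (hi : w i ≠ 0) : (A *ᵥ u) i = v (Sum.inr ()) := by
    have := congrFun hv (Sum.inl i)
    rw [bordered_mulVec_inl, if_pos (by simpa using hi)] at this
    exact sub_eq_zero.1 this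
  have hoff (i : ι) (hi : w i = 0) : u i = 0 := by
    have := congrFun hv (Sum.inl i)
    rwa [bordered_mulVec_inl, if_neg (by simpa using hi)] at this
  have hsum : ∑ i, u i = 0 := by
    have := congrFun hv (Sum.inr ())
    rwa [bordered_mulVec_inr] at this
  by_cases hu : u = 0
  · obtain ⟨i, hi⟩ : ∃ i, w i ≠ 0 := by
      by_contra! h
      simpa [h] using hwΔ.2
    refine hv₀ (funext fun r => ?_)
    rcases r with j | ⟨⟩
    · exact congrFun hu j
    · simpa [hu] using (hrow i hi).symm
  obtain ⟨s, hs, hcard⟩ := exists_add_smul_mem_stdSimplex_card_support_lt hwΔ hu hsum hoff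
  have hsupp (k : ι) (hk : u k ≠ 0) : w k ≠ 0 := fun h => hk (hoff k h)
  have hwu : w ⬝ᵥ A *ᵥ u = 0 := by
    rw [← hA.dotProduct_mulVec_comm, dotProduct_eq_mul_sum_of_ne_zero (c := w ⬝ᵥ A *ᵥ w)
      fun k hk => hA.mulVec_eq_of_isMinOn_stdSimplex hwΔ hmin (hsupp k hk), hsum, mul_zero]
  have huu : u ⬝ᵥ A *ᵥ u = 0 := by
    rw [dotProduct_eq_mul_sum_of_ne_zero fun k hk => hrow k (hsupp k hk), hsum, mul_zero]
  have hval : (w + s • u) ⬝ᵥ A *ᵥ (w + s • u) = w ⬝ᵥ A *ᵥ w := by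
    rw [hA.dotProduct_mulVec_add_smul, hwu, huu]; ring
  have hmin' : IsMinOn (fun v => v ⬝ᵥ A *ᵥ v) (stdSimplex ℝ ι) (w + s • u) :=
    fun x hx => (hval.trans_le (hmin hx) :)
  exact hcard.not_ge (hsmall ⟨hs, hmin'⟩ hcard.le)

end Matrix.IsSymm

theorem exists_mem_stdSimplex_dotProduct_mulVec_neg {ι : Type*} [Fintype ι] {A : Matrix ι ι ℝ}
    (h : ∃ x : ι → ℝ, (∀ i, 0 ≤ x i) ∧ x ⬝ᵥ A *ᵥ x < 0) :
    ∃ v ∈ stdSimplex ℝ ι, v ⬝ᵥ A *ᵥ v < 0 := by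
  obtain ⟨x, hx₀, hx⟩ := h
  have hsum : 0 < ∑ i, x i := by
    refine (Finset.sum_nonneg fun i _ => hx₀ i).lt_of_ne fun h => hx.ne ?_
    have : x = 0 := funext fun i =>
      (Finset.sum_eq_zero_iff_of_nonneg fun i _ => hx₀ i).1 h.symm i (mem_univ i)
    simp [this]
  refine ⟨(∑ i, x i)⁻¹ • x, ⟨fun i => mul_nonneg (inv_nonneg.2 hsum.le) (hx₀ i), ?_⟩, ?_⟩
  · simp [← Finset.mul_sum, inv_mul_cancel₀ hsum.ne']
  · simp only [mulVec_smul, dotProduct_smul, smul_dotProduct, smul_eq_mul]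
    exact mul_neg_of_pos_of_neg (inv_pos.2 hsum) (mul_neg_of_pos_of_neg (inv_pos.2 hsum) hx)

namespace Matrix.IsSymm

variable {ι : Type*} [Fintype ι] [DecidableEq ι] {M : Matrix ι ι ℤ} {w : ι → ℝ}

theorem exists_intCast_eq_det_bordered_mul (hM : M.IsSymm)
    (hw : MinimalFor (fun v => v ∈ stdSimplex ℝ ι ∧
      IsMinOn (fun v => v ⬝ᵥ M.map ((↑) : ℤ → ℝ) *ᵥ v) (stdSimplex ℝ ι) v)
      (fun v => #{k | v k ≠ 0}) w) :
    ∃ z : ℤ, ((bordered M {k | w k ≠ 0}).det : ℝ) * (w ⬝ᵥ M.map ((↑) : ℤ → ℝ) *ᵥ w) = z := by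
  obtain ⟨hwΔ, hmin⟩ := hw.1
  have hsys : (bordered M {k | w k ≠ 0}).map (Int.castRingHom ℝ) *ᵥ
      Sum.elim w (fun _ => w ⬝ᵥ M.map ((↑) : ℤ → ℝ) *ᵥ w) = Int.castRingHom ℝ ∘ Sum.elim 0 1 := by
    rw [bordered_map]
    funext r
    rcases r with i | ⟨⟨⟩⟩
    · rw [bordered_mulVec_inl]
      split_ifs with hi
      · simp only [Finset.mem_filter, mem_univ, true_and] at hi
        simp [(hM.map _).mulVec_eq_of_isMinOn_stdSimplex hwΔ hmin hi]
      · simpa using hi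
    · simpa [bordered_mulVec_inr] using hwΔ.2
  exact ⟨_, by simpa using congrFun (map_det_smul_eq_comp_adjugate_mulVec _ _ hsys) (Sum.inr ())⟩

theorem exists_mem_stdSimplex_mul_dotProduct_mulVec_le_neg_one (hM : M.IsSymm)
    (hncop : ∃ x : ι → ℝ, (∀ i, 0 ≤ x i) ∧ x ⬝ᵥ M.map ((↑) : ℤ → ℝ) *ᵥ x < 0) :
    ∃ w ∈ stdSimplex ℝ ι,
      ((Fintype.card ι + 1)! * ∏ i, ∏ j, ((M i j).natAbs + 1) : ℕ) *
        (w ⬝ᵥ M.map ((↑) : ℤ → ℝ) *ᵥ w) ≤ -1 := by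
  set A := M.map ((↑) : ℤ → ℝ)
  obtain ⟨x, hxΔ, hx⟩ := exists_mem_stdSimplex_dotProduct_mulVec_neg hncop
  have : Nonempty ι := by
    by_contra h
    simpa [not_nonempty_iff.1 h] using hxΔ.2
  obtain ⟨w, hw⟩ := exists_minimalFor_card_support_isMinOn_stdSimplex
    (f := fun v => v ⬝ᵥ A *ᵥ v) (by fun_prop)
  have hneg : w ⬝ᵥ A *ᵥ w < 0 := (hw.1.2 hxΔ).trans_lt hx
  set B := bordered M {k | w k ≠ 0}
  have hdet : B.det ≠ 0 := by
    intro h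
    apply (hM.map _).det_bordered_ne_zero hw
    have hmap : B.map (Int.castRingHom ℝ) = bordered A {k | w k ≠ 0} := bordered_map _ _ _
    rw [← hmap, ← RingHom.mapMatrix_apply, ← RingHom.map_det, h, map_zero]
  obtain ⟨z, hz⟩ := hM.exists_intCast_eq_det_bordered_mul hw
  have hz₀ : z ≠ 0 := by
    rintro rfl
    exact mul_ne_zero (Int.cast_ne_zero.2 hdet) hneg.ne (hz.trans Int.cast_zero)
  have hbound :
      |(B.det : ℝ)| ≤ ((Fintype.card ι + 1)! * ∏ i, ∏ j, ((M i j).natAbs + 1) : ℕ) := by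
    rw [← Int.cast_abs, ← Int.cast_natCast]
    exact Int.cast_le.2 (abs_det_bordered_le M _)
  refine ⟨w, hw.1.1, ?_⟩
  calc _ ≤ |(B.det : ℝ)| * (w ⬝ᵥ A *ᵥ w) := mul_le_mul_of_nonpos_right hbound hneg.le
    _ = -|(z : ℝ)| := by rw [← hz, abs_mul, abs_of_neg hneg]; ring
    _ ≤ -1 := neg_le_neg (by exact_mod_cast Int.one_le_abs hz₀)

end Matrix.IsSymm

namespace Matrix

variable {ι : Type*} [Fintype ι] {A : Matrix ι ι ℝ}

theorem exists_nat_div_dotProduct_mulVec_neg {d R : ℝ}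
    (hd : ∀ i j, |A i j| ≤ d) {w : ι → ℝ} (hw : w ∈ stdSimplex ℝ ι) (hR : 0 < R)
    (hRw : R * (w ⬝ᵥ A *ᵥ w) ≤ -1) :
    ∃ a : ι → ℕ, (∀ j, (a j : ℝ) ≤ 4 * d * Fintype.card ι ^ 2 * R) ∧
      (fun j => (a j : ℝ) / (4 * d * Fintype.card ι ^ 2)) ⬝ᵥ A *ᵥ
        (fun j => (a j : ℝ) / (4 * d * Fintype.card ι ^ 2)) < 0 := by
  set D : ℝ := 4 * d * Fintype.card ι ^ 2
  have hw₁ (i : ι) : |w i| ≤ 1 :=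
    abs_le.2 ⟨by linarith [hw.1 i], (mem_Icc_of_mem_stdSimplex hw i).2⟩
  have hQw : w ⬝ᵥ A *ᵥ w < 0 := by
    by_contra! h; nlinarith
  have hD : 0 < D := by
    have := abs_dotProduct_mulVec_le hd hw₁ hw₁
    rw [abs_of_neg hQw] at this
    simp only [D]; nlinarith
  set x : ι → ℝ := R • w
  have hx₀ (j : ι) : 0 ≤ D * x j := mul_nonneg hD.le (mul_nonneg hR.le (hw.1 j))
  have hxR (j : ι) : x j ≤ R := by
    show R * w j ≤ R
    nlinarith [(mem_Icc_of_mem_stdSimplex hw j).2]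
  set a : ι → ℕ := fun j => ⌊D * x j⌋₊
  set y : ι → ℝ := fun j => (a j : ℝ) / D
  have hyx (j : ι) : y j ≤ x j := by
    rw [div_le_iff₀ hD, mul_comm]; exact Nat.floor_le (hx₀ j)
  have hxy (j : ι) : x j - y j ≤ 1 / D := by
    have := Nat.lt_floor_add_one (D * x j)
    rw [sub_le_iff_le_add, ← add_div, le_div_iff₀ hD]
    linarith
  have hy₀ (j : ι) : 0 ≤ y j := by positivity
  have hround : |x ⬝ᵥ A *ᵥ x - y ⬝ᵥ A *ᵥ y| ≤ Fintype.card ι ^ 2 * (d * (2 * R * (1 / D))) :=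
    abs_dotProduct_mulVec_sub_le hd
      (fun j => abs_le.2 ⟨by linarith [hx₀ j, hxR j, hy₀ j, hyx j], hxR j⟩)
      (fun j => abs_le.2 ⟨by linarith [hy₀ j], (hyx j).trans (hxR j)⟩)
      (fun j => abs_le.2 ⟨by linarith [hyx j, hD, one_div_pos.2 hD], hxy j⟩)
  have hhalf : Fintype.card ι ^ 2 * (d * (2 * R * (1 / D))) = R / 2 := by
    have := hD.ne'
    field_simp
    simp only [D]; ring
  have hQx : x ⬝ᵥ A *ᵥ x = R * (R * (w ⬝ᵥ A *ᵥ w)) := by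
    simp only [x, mulVec_smul, dotProduct_smul, smul_dotProduct, smul_eq_mul]
  refine ⟨a, fun j => ?_, ?_⟩
  · calc (a j : ℝ) ≤ D * x j := Nat.floor_le (hx₀ j)
      _ ≤ D * R := mul_le_mul_of_nonneg_left (hxR j) hD.le
  · rw [hhalf, abs_le] at hround
    have : x ⬝ᵥ A *ᵥ x ≤ -R := by rw [hQx]; nlinarith
    show y ⬝ᵥ A *ᵥ y < 0
    linarith [hround.1]

end Matrix

theorem Nat.factorial_succ_le_two_pow_choose (n : ℕ) : (n + 1)! ≤ 2 ^ (n + 1).choose 2 := by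
  induction n with
  | zero => simp
  | succ n ih =>
    rw [Nat.factorial_succ, Nat.choose_succ_succ', Nat.choose_one_right, pow_add]
    exact Nat.mul_le_mul (Nat.succ_le_of_lt Nat.lt_two_pow_self) ih

theorem Fin.sum_card_filter_le_eq_choose (n : ℕ) :
    ∑ i : Fin n, #{j | i ≤ j} = (n + 1).choose 2 := by
  simp only [Finset.filter_le_eq_Ici, Fin.card_Ici]
  rw [Fin.sum_univ_eq_sum_range (fun k => n - k) n, ← Finset.sum_range_reflect,
    Finset.sum_congr rfl fun k hk => show n - (n - 1 - k) = k + 1 by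
      have := Finset.mem_range.1 hk; omega,
    Nat.choose_two_right, ← Finset.sum_range_id, Finset.sum_range_succ', add_zero]

theorem Finset.prod_prod_le_sq_prod_prod_filter_le {ι : Type*} [Fintype ι] [LinearOrder ι]
    {a : ι → ι → ℕ} (hsymm : ∀ i j, a i j = a j i) (hpos : ∀ i j, 0 < a i j) :
    ∏ i, ∏ j, a i j ≤ (∏ i, ∏ j ∈ {j | i ≤ j}, a i j) ^ 2 := by
  have hsplit : ∏ i, ∏ j, a i j =
      (∏ i, ∏ j ∈ {j | i ≤ j}, a i j) * ∏ i, ∏ j ∈ {j | j < i}, a i j := by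
    rw [← Finset.prod_mul_distrib]
    refine Finset.prod_congr rfl fun i _ => ?_
    simp_rw [← not_le]
    exact (Finset.prod_filter_mul_prod_filter_not _ _ _).symm
  have hlower : ∏ i, ∏ j ∈ {j | j < i}, a i j ≤ ∏ i, ∏ j ∈ {j | i ≤ j}, a i j := by
    rw [Finset.prod_comm' (t' := univ) (s' := fun j => {i | j < i}) (by simp)]
    gcongr with j _
    simp_rw [hsymm _ j]
    exact Finset.prod_le_prod_of_subset_of_one_le' (fun i => by simpa using le_of_lt)
      fun i _ _ => hpos j i
  rw [hsplit, sq]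
  exact Nat.mul_le_mul_left _ hlower

theorem two_pow_choose_mul_prod_le_two_pow_encodingLength {n : ℕ}
    (M : Matrix (Fin n) (Fin n) ℤ) :
    2 ^ (n + 1).choose 2 * ∏ i, ∏ j ∈ {j | i ≤ j}, ((M i j).natAbs + 1) ≤
      2 ^ encodingLength M := by
  rw [← Fin.sum_card_filter_le_eq_choose, encodingLength, ← Finset.prod_pow_eq_pow_sum,
    ← Finset.prod_pow_eq_pow_sum, ← Finset.prod_mul_distrib]
  gcongr with i _
  rw [← Finset.prod_pow_eq_pow_sum, Finset.card_eq_sum_ones, ← Finset.prod_pow_eq_pow_sum,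
    ← Finset.prod_mul_distrib]
  gcongr with j _
  rw [pow_one, pow_succ']
  exact Nat.mul_le_mul_left 2 (Nat.le_pow_clog one_lt_two _)

theorem factorial_mul_prod_le_two_pow_encodingLength {n : ℕ} (hn : 0 < n)
    {M : Matrix (Fin n) (Fin n) ℤ} (hM : M.IsSymm) :
    (n + 1)! * ∏ i, ∏ j, ((M i j).natAbs + 1) ≤ 2 ^ (2 * encodingLength M - 1) := by
  set T := (n + 1).choose 2
  set P := ∏ i, ∏ j ∈ {j | i ≤ j}, ((M i j).natAbs + 1)
  have hT : 2 ≤ 2 ^ T := Nat.le_self_pow (Nat.choose_pos (by omega)).ne' 2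
  have hP : 1 ≤ P := Finset.one_le_prod' fun i _ => Finset.one_le_prod' fun j _ => by omega
  have hL : 2 ^ T * P ≤ 2 ^ encodingLength M :=
    two_pow_choose_mul_prod_le_two_pow_encodingLength M
  have hL₁ : 1 ≤ encodingLength M := by
    by_contra! h
    rw [Nat.lt_one_iff.1 h, pow_zero] at hL
    nlinarith
  have hsq : ∏ i, ∏ j, ((M i j).natAbs + 1) ≤ P ^ 2 :=
    Finset.prod_prod_le_sq_prod_prod_filter_le (fun i j => by rw [hM.apply]) fun _ _ => by omega
  refine Nat.le_of_mul_le_mul_left ?_ two_pos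
  calc 2 * ((n + 1)! * ∏ i, ∏ j, ((M i j).natAbs + 1)) ≤ 2 * (2 ^ T * P ^ 2) :=
        Nat.mul_le_mul_left 2 (Nat.mul_le_mul (Nat.factorial_succ_le_two_pow_choose n) hsq)
    _ ≤ (2 ^ T * P) ^ 2 := by nlinarith
    _ ≤ (2 ^ encodingLength M) ^ 2 := Nat.pow_le_pow_left hL 2
    _ = 2 * 2 ^ (2 * encodingLength M - 1) := by
      rw [← pow_mul, ← pow_succ']; congr 1; omega

theorem Matrix.exists_nat_div_dotProduct_intCast_mulVec_neg {ι : Type*} [Fintype ι]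
    {M : Matrix ι ι ℤ} {d R : ℕ} (hd : ∀ i j, (M i j).natAbs ≤ d) {w : ι → ℝ}
    (hw : w ∈ stdSimplex ℝ ι) (hR : 0 < R)
    (hRw : (R : ℝ) * (w ⬝ᵥ M.map ((↑) : ℤ → ℝ) *ᵥ w) ≤ -1) :
    ∃ a : ι → ℕ, (∀ j, a j ≤ 4 * d * Fintype.card ι ^ 2 * R) ∧
      (fun j => (a j : ℚ) / (4 * d * Fintype.card ι ^ 2)) ⬝ᵥ M.map ((↑) : ℤ → ℚ) *ᵥ
        (fun j => (a j : ℚ) / (4 * d * Fintype.card ι ^ 2)) < 0 := by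
  have hdR (i j : ι) : |M.map ((↑) : ℤ → ℝ) i j| ≤ d := by
    rw [map_apply, ← Int.cast_abs, Int.abs_eq_natAbs]
    exact_mod_cast hd i j
  obtain ⟨a, ha, hneg⟩ := exists_nat_div_dotProduct_mulVec_neg hdR hw (by positivity) hRw
  refine ⟨a, fun j => by exact_mod_cast ha j, ?_⟩
  rw [← Rat.cast_lt (K := ℝ), Rat.cast_zero]
  simpa [dotProduct, mulVec] using hneg

theorem natAbs_le_maxAbs {n : ℕ} (M : Matrix (Fin n) (Fin n) ℤ) (i j : Fin n) :
    (M i j).natAbs ≤ maxAbs M :=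
  Finset.le_sup (f := fun p : Fin n × Fin n => (M p.1 p.2).natAbs) (mem_univ (i, j))

theorem stmt0_general {n : ℕ} (M : Matrix (Fin n) (Fin n) ℤ)
    (hsym : M.IsSymm)
    (hncop : ∃ x : Fin n → ℝ, (∀ i, 0 ≤ x i) ∧
      x ⬝ᵥ (M.map ((↑) : ℤ → ℝ)) *ᵥ x < 0)
    (L d : ℕ) (hL : L = encodingLength M) (hd : d = maxAbs M) :
    ∃ y : Fin n → ℚ, (∀ j, 0 ≤ y j) ∧
      y ⬝ᵥ (M.map ((↑) : ℤ → ℚ)) *ᵥ y < 0 ∧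
      ∀ j, ∃ a : ℕ, y j = (a : ℚ) / (4 * d * n ^ 2) ∧
        (a : ℚ) ≤ 4 * d * n ^ 2 * 2 ^ (2 * L - 1) + 1 := by
  obtain ⟨w, hw, hgap⟩ := hsym.exists_mem_stdSimplex_mul_dotProduct_mulVec_le_neg_one hncop
  rw [Fintype.card_fin] at hgap
  have hn : 0 < n := Nat.pos_of_ne_zero fun h => by subst h; simp [stdSimplex] at hw
  have hK : ((n + 1)! * ∏ i, ∏ j, ((M i j).natAbs + 1) : ℕ) ≤ ((2 ^ (2 * L - 1) : ℕ) : ℝ) := by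
    rw [hL]; exact_mod_cast factorial_mul_prod_le_two_pow_encodingLength hn hsym
  have hneg : w ⬝ᵥ M.map ((↑) : ℤ → ℝ) *ᵥ w < 0 :=
    neg_of_mul_neg_right (hgap.trans_lt (by norm_num)) (Nat.cast_nonneg _)
  obtain ⟨a, ha, hround⟩ := exists_nat_div_dotProduct_intCast_mulVec_neg
    (fun i j => hd ▸ natAbs_le_maxAbs M i j) hw (by positivity)
    ((mul_le_mul_of_nonpos_right hK hneg.le).trans hgap)
  simp only [Fintype.card_fin] at ha hround
  refine ⟨_, fun j => by positivity, hround, fun j => ⟨a j, rfl, ?_⟩⟩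
  exact_mod_cast (ha j).trans (Nat.le_succ _)

theorem stmt0 {n : ℕ} (hn : 1 ≤ n) (M : Matrix (Fin n) (Fin n) ℤ)
    (hsym : M.IsSymm)
    (hncop : ∃ x : Fin n → ℝ, (∀ i, 0 ≤ x i) ∧
      x ⬝ᵥ (M.map ((↑) : ℤ → ℝ)) *ᵥ x < 0)
    (L d : ℕ) (hL : L = encodingLength M) (hd : d = maxAbs M) :
    ∃ y : Fin n → ℚ, (∀ j, 0 ≤ y j) ∧
      y ⬝ᵥ (M.map ((↑) : ℤ → ℚ)) *ᵥ y < 0 ∧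
      ∀ j, ∃ a : ℕ, y j = (a : ℚ) / (4 * d * n ^ 2) ∧
        (a : ℚ) ≤ 4 * d * n ^ 2 * 2 ^ (2 * L - 1) + 1 :=
  stmt0_general M hsym hncop L d hL hd
end

section
/- Let M be a symmetric real n×n matrix. Consider the linear system As = b in nonnegative variables s ∈ ℝ^{4n}, where A ∈ ℝ^{2n×4n} is the block matrix with first block row (−M, −I, I, 0) and second block row (I, 0, 0, I), and b = (0, e)ᵀ ∈ ℝ^{2n} (e the all-ones vector in ℝⁿ). Then there exist x̄, ȳ, ū, v̄ ∈ ℝⁿ with nonnegative entries such that s = (x̄, ȳ, ū, v̄)ᵀ is a basic feasible solution of this system (i.e. As = b, s ≥ 0, and the columns A_j of A with s_j > 0 are linearly independent), the complementarity condition ūᵀx̄ + v̄ᵀȳ = 0 holds, and x̄ minimizes Q(x) = xᵀMx over [0,1]ⁿ. -/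
/-!
A minimiser `x` of `Q` over the unit cube satisfies the KKT conditions: `(M x)ᵢ ≤ 0` where
`xᵢ > 0` and `(M x)ᵢ ≥ 0` where `xᵢ < 1`. Hence `s = (x, (M x)⁻, (M x)⁺, 1 - x)` is a feasible,
complementary solution of `A s = b`. Choose, among all minimisers, one with the fewest
fractional coordinates. A linear dependency among the columns of `A` on the support of `s`
yields a direction `a ≠ 0` supported on the fractional coordinates of `x` with `(M a)ᵢ = 0`
there; then `Q` is constant along `x + t a`, and moving along this line to the boundary of the
cube gives a minimiser with fewer fractional coordinates.
-/

open Matrix Finset Filter Topology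

theorem nonneg_of_forall_mul_add_mul_sq_nonneg {α β δ : ℝ} (hδ : 0 < δ)
    (h : ∀ t ∈ Set.Ioc 0 δ, 0 ≤ α * t + β * t ^ 2) : 0 ≤ α := by
  have hlim : Tendsto (fun t => α + β * t) (𝓝[>] 0) (𝓝 α) := by
    have : Tendsto (fun t => α + β * t) (𝓝 0) (𝓝 (α + β * 0)) :=
      Continuous.tendsto (by fun_prop) 0
    simpa using this.mono_left nhdsWithin_le_nhds
  refine ge_of_tendsto hlim ?_
  filter_upwards [Ioc_mem_nhdsGT hδ] with t ht
  have hprod : 0 ≤ t * (α + β * t) := by linarith [h t ht]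
  exact nonneg_of_mul_nonneg_right hprod ht.1

theorem Matrix.IsSymm.dotProduct_mulVec_add_smul_s3 {ι : Type*} [Fintype ι] {M : Matrix ι ι ℝ}
    (hM : M.IsSymm) (x a : ι → ℝ) (t : ℝ) :
    (x + t • a) ⬝ᵥ M *ᵥ (x + t • a) =
      x ⬝ᵥ M *ᵥ x + 2 * t * (a ⬝ᵥ M *ᵥ x) + t ^ 2 * (a ⬝ᵥ M *ᵥ a) := by
  have hcomm : x ⬝ᵥ M *ᵥ a = a ⬝ᵥ M *ᵥ x := by
    rw [dotProduct_mulVec, ← mulVec_transpose, hM.eq, dotProduct_comm]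
  simp only [mulVec_add, mulVec_smul, dotProduct_add, add_dotProduct, dotProduct_smul,
    smul_dotProduct, hcomm, smul_eq_mul]
  ring

/-- For `x ∈ (0, 1)` and `a ≠ 0`, the time `t > 0` at which `x + t * a` reaches `{0, 1}`. -/
noncomputable def exitTime (x a : ℝ) : ℝ :=
  if 0 < a then (1 - x) / a else -x / a

theorem exitTime_pos {x a : ℝ} (hx : x ∈ Set.Ioo 0 1) (ha : a ≠ 0) : 0 < exitTime x a := by
  unfold exitTime
  split_ifs with hpos
  · exact div_pos (by linarith [hx.2]) hpos
  · exact div_pos_of_neg_of_neg (by linarith [hx.1]) (lt_of_le_of_ne (not_lt.1 hpos) ha)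

theorem add_mul_mem_Icc_of_le_exitTime {x a t : ℝ} (hx : x ∈ Set.Icc 0 1) (ht : 0 ≤ t)
    (hle : t ≤ exitTime x a) : x + t * a ∈ Set.Icc 0 1 := by
  obtain ⟨hx0, hx1⟩ := hx
  unfold exitTime at hle
  rcases lt_trichotomy a 0 with hneg | rfl | hpos
  · rw [if_neg hneg.not_gt, le_div_iff_of_neg hneg] at hle
    exact ⟨by linarith, by nlinarith⟩
  · simpa using And.intro hx0 hx1
  · rw [if_pos hpos, le_div_iff₀ hpos] at hle
    exact ⟨by nlinarith, by linarith⟩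

theorem add_exitTime_mul_notMem_Ioo (x : ℝ) {a : ℝ} (ha : a ≠ 0) :
    x + exitTime x a * a ∉ Set.Ioo 0 1 := by
  unfold exitTime
  split_ifs <;> simp [div_mul_cancel₀ _ ha]

abbrev unitCube (ι : Type*) : Set (ι → ℝ) := Set.univ.pi fun _ => Set.Icc 0 1

theorem add_smul_single_mem_unitCube {ι : Type*} [DecidableEq ι] {x : ι → ℝ}
    (hx : x ∈ unitCube ι) {i : ι} {t : ℝ} (ht : x i + t ∈ Set.Icc 0 1) :
    x + t • Pi.single i 1 ∈ unitCube ι := by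
  intro j _
  by_cases hj : j = i
  · subst hj
    simpa using ht
  · simpa [hj] using hx j (Set.mem_univ j)

section Cube

variable {ι : Type*} [Fintype ι]

theorem exists_isMinOn_unitCube (M : Matrix ι ι ℝ) :
    ∃ x ∈ unitCube ι, IsMinOn (fun x => x ⬝ᵥ M *ᵥ x) (unitCube ι) x :=
  (isCompact_univ_pi fun _ => isCompact_Icc).exists_isMinOn
    ⟨0, fun _ _ => ⟨le_rfl, zero_le_one⟩⟩ (by fun_prop)

noncomputable def fracSupport (x : ι → ℝ) : Finset ι :=
  univ.filter fun i => x i ∈ Set.Ioo 0 1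

theorem exists_add_smul_mem_unitCube_fracSupport_ssubset {x a : ι → ℝ} (hx : x ∈ unitCube ι)
    (ha : a ≠ 0) (hsupp : ∀ i, a i ≠ 0 → x i ∈ Set.Ioo 0 1) :
    ∃ t : ℝ, x + t • a ∈ unitCube ι ∧ fracSupport (x + t • a) ⊂ fracSupport x := by
  set T := univ.filter fun i => a i ≠ 0
  have hT : T.Nonempty := by
    obtain ⟨i, hi⟩ := Function.ne_iff.1 ha
    exact ⟨i, mem_filter.2 ⟨mem_univ i, hi⟩⟩
  obtain ⟨i₀, hi₀, ht⟩ := exists_mem_eq_inf' hT fun i => exitTime (x i) (a i)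
  set t := T.inf' hT fun i => exitTime (x i) (a i)
  have hmemT : ∀ {i}, a i ≠ 0 → i ∈ T := fun hi => mem_filter.2 ⟨mem_univ _, hi⟩
  have ht0 : 0 < t := (lt_inf'_iff hT).2 fun i hi =>
    exitTime_pos (hsupp i (mem_filter.1 hi).2) (mem_filter.1 hi).2
  have hcoord : ∀ i, a i = 0 → (x + t • a) i = x i := fun i hi => by simp [hi]
  have ha₀ : a i₀ ≠ 0 := (mem_filter.1 hi₀).2
  refine ⟨t, fun i _ => ?_, ?_⟩
  · by_cases hi : a i = 0
    · rw [hcoord i hi]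
      exact hx i (Set.mem_univ i)
    · exact add_mul_mem_Icc_of_le_exitTime (hx i (Set.mem_univ i)) ht0.le
        (inf'_le _ (hmemT hi))
  · have hsub : fracSupport (x + t • a) ⊆ fracSupport x := fun i hi => by
      simp only [fracSupport, mem_filter, mem_univ, true_and] at hi ⊢
      by_cases hai : a i = 0
      · rwa [hcoord i hai] at hi
      · exact hsupp i hai
    refine (ssubset_iff_of_subset hsub).2 ⟨i₀, ?_, ?_⟩
    · simpa [fracSupport] using hsupp i₀ ha₀
    · simpa [fracSupport, ht] using add_exitTime_mul_notMem_Ioo (x i₀) ha₀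

end Cube

section Minimizer

variable {ι : Type*} [Fintype ι] [DecidableEq ι] {M : Matrix ι ι ℝ} {x : ι → ℝ}

theorem IsMinOn.mul_add_mul_sq_nonneg (hM : M.IsSymm) (hx : x ∈ unitCube ι)
    (hmin : IsMinOn (fun x => x ⬝ᵥ M *ᵥ x) (unitCube ι) x) {i : ι} {t : ℝ}
    (ht : x i + t ∈ Set.Icc 0 1) : 0 ≤ 2 * (M *ᵥ x) i * t + M i i * t ^ 2 := by
  have hle : x ⬝ᵥ M *ᵥ x ≤ (x + t • Pi.single i 1) ⬝ᵥ M *ᵥ (x + t • Pi.single i 1) :=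
    hmin (add_smul_single_mem_unitCube hx ht)
  simp only [hM.dotProduct_mulVec_add_smul_s3, single_dotProduct, mulVec_single_one, one_mul,
    col_apply] at hle
  linarith

theorem IsMinOn.mulVec_apply_nonneg (hM : M.IsSymm) (hx : x ∈ unitCube ι)
    (hmin : IsMinOn (fun x => x ⬝ᵥ M *ᵥ x) (unitCube ι) x) {i : ι} (hi : x i < 1) :
    0 ≤ (M *ᵥ x) i := by
  have hx0 := (hx i (Set.mem_univ i)).1
  have := nonneg_of_forall_mul_add_mul_sq_nonneg (sub_pos.2 hi) fun t ht =>
    hmin.mul_add_mul_sq_nonneg hM hx (t := t) ⟨by linarith [ht.1], by linarith [ht.2]⟩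
  linarith

theorem IsMinOn.mulVec_apply_nonpos (hM : M.IsSymm) (hx : x ∈ unitCube ι)
    (hmin : IsMinOn (fun x => x ⬝ᵥ M *ᵥ x) (unitCube ι) x) {i : ι} (hi : 0 < x i) :
    (M *ᵥ x) i ≤ 0 := by
  have hx1 := (hx i (Set.mem_univ i)).2
  have := nonneg_of_forall_mul_add_mul_sq_nonneg (α := -(2 * (M *ᵥ x) i)) (β := M i i) hi
    fun t ht => by
      have := hmin.mul_add_mul_sq_nonneg hM hx (t := -t) ⟨by linarith [ht.2], by linarith [ht.1]⟩
      linarith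
  linarith

theorem IsMinOn.mulVec_apply_eq_zero (hM : M.IsSymm) (hx : x ∈ unitCube ι)
    (hmin : IsMinOn (fun x => x ⬝ᵥ M *ᵥ x) (unitCube ι) x) {i : ι}
    (hi : x i ∈ Set.Ioo 0 1) : (M *ᵥ x) i = 0 :=
  le_antisymm (hmin.mulVec_apply_nonpos hM hx hi.1) (hmin.mulVec_apply_nonneg hM hx hi.2)

theorem IsMinOn.posPart_dotProduct_add_dotProduct_negPart (hM : M.IsSymm)
    (hx : x ∈ unitCube ι) (hmin : IsMinOn (fun x => x ⬝ᵥ M *ᵥ x) (unitCube ι) x) :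
    (M *ᵥ x)⁺ ⬝ᵥ x + (1 - x) ⬝ᵥ (M *ᵥ x)⁻ = 0 := by
  have hu : (M *ᵥ x)⁺ ⬝ᵥ x = 0 := sum_eq_zero fun i _ => by
    rcases (hx i (Set.mem_univ i)).1.lt_or_eq with hpos | hzero
    · simp [posPart_eq_zero.2 (hmin.mulVec_apply_nonpos hM hx hpos)]
    · simp [← hzero]
  have hv : (1 - x) ⬝ᵥ (M *ᵥ x)⁻ = 0 := sum_eq_zero fun i _ => by
    rcases (hx i (Set.mem_univ i)).2.lt_or_eq with hlt | hone
    · simp [negPart_eq_zero.2 (hmin.mulVec_apply_nonneg hM hx hlt)]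
    · simp [hone]
  rw [hu, hv, add_zero]

end Minimizer

theorem Matrix.linearIndependent_transpose_subtype_of_mulVec_eq_zero {R m k : Type*}
    [CommRing R] [Fintype k] {A : Matrix m k R} {p : k → Prop}
    (h : ∀ g : k → R, (∀ j, g j ≠ 0 → p j) → A *ᵥ g = 0 → g = 0) :
    LinearIndependent R fun j : {j // p j} => Aᵀ j := by
  classical
  change LinearIndepOn R (fun j => Aᵀ j) {j | p j}
  refine linearIndepOn_iff''.2 fun t g hts hgt hsum i hi => ?_
  refine congrFun (h g (fun j hj => hts (by_contra fun hjt => hj (hgt j hjt))) ?_) i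
  ext r
  have hr := congrFun hsum r
  simp only [Finset.sum_apply, Pi.smul_apply, transpose_apply, smul_eq_mul,
    Pi.zero_apply] at hr
  rw [Pi.zero_apply, mulVec, dotProduct,
    ← sum_subset (subset_univ t) fun j _ hj => by simp [hgt j hj]]
  simpa only [mul_comm] using hr

section LCP

variable {ι : Type*} [Fintype ι] {M : Matrix ι ι ℝ} {x : ι → ℝ}

noncomputable def lcpPoint (M : Matrix ι ι ℝ) (x : ι → ℝ) : (ι ⊕ ι) ⊕ (ι ⊕ ι) → ℝ :=
  Sum.elim (Sum.elim x (M *ᵥ x)⁻) (Sum.elim (M *ᵥ x)⁺ (1 - x))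

theorem lcpPoint_nonneg (M : Matrix ι ι ℝ) (hx : x ∈ unitCube ι) (j : (ι ⊕ ι) ⊕ (ι ⊕ ι)) :
    0 ≤ lcpPoint M x j := by
  rcases j with (i | i) | (i | i)
  · exact (hx i (Set.mem_univ i)).1
  · exact negPart_nonneg _
  · exact posPart_nonneg _
  · exact sub_nonneg.2 (hx i (Set.mem_univ i)).2

variable [DecidableEq ι]

/-- The matrix `A` of the statement, with columns indexed by `(x, y) ⊕ (u, v)`. -/
def lcpMatrix (M : Matrix ι ι ℝ) : Matrix (ι ⊕ ι) ((ι ⊕ ι) ⊕ (ι ⊕ ι)) ℝ :=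
  fromBlocks (fromCols (-M) (-1)) (fromCols 1 0) (fromCols 1 0) (fromCols 0 1)

theorem lcpMatrix_mulVec (M : Matrix ι ι ℝ) (x y u v : ι → ℝ) :
    lcpMatrix M *ᵥ Sum.elim (Sum.elim x y) (Sum.elim u v) =
      Sum.elim (u - M *ᵥ x - y) (x + v) := by
  simp only [lcpMatrix, fromBlocks_mulVec, Sum.elim_comp_inl, Sum.elim_comp_inr,
    fromCols_mulVec_sumElim, neg_mulVec, one_mulVec, zero_mulVec, add_zero, zero_add]
  congr 1
  abel

theorem lcpMatrix_mulVec_lcpPoint (M : Matrix ι ι ℝ) (x : ι → ℝ) :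
    lcpMatrix M *ᵥ lcpPoint M x = Sum.elim (0 : ι → ℝ) 1 := by
  rw [lcpPoint, lcpMatrix_mulVec, sub_sub,
    sub_eq_zero.2 (sub_eq_iff_eq_add.1 (posPart_sub_negPart _)), add_sub_cancel]

theorem exists_direction_of_lcpMatrix_mulVec_eq_zero
    (hkkt : ∀ i, x i ∈ Set.Ioo 0 1 → (M *ᵥ x) i = 0) {g : (ι ⊕ ι) ⊕ (ι ⊕ ι) → ℝ}
    (hg : lcpMatrix M *ᵥ g = 0) (hsupp : ∀ j, g j ≠ 0 → 0 < lcpPoint M x j) (hg0 : g ≠ 0) :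
    ∃ a : ι → ℝ, a ≠ 0 ∧ ∀ i, a i ≠ 0 → x i ∈ Set.Ioo 0 1 ∧ (M *ᵥ a) i = 0 := by
  obtain ⟨a, b, c, d, rfl⟩ : ∃ a b c d : ι → ℝ, g = Sum.elim (Sum.elim a b) (Sum.elim c d) :=
    ⟨_, _, _, _, by ext ((i | i) | (i | i)) <;> rfl⟩
  rw [lcpMatrix_mulVec] at hg
  have hrow₁ (i : ι) : c i - (M *ᵥ a) i - b i = 0 := by simpa using congrFun hg (.inl i)
  have hrow₂ (i : ι) : a i + d i = 0 := by simpa using congrFun hg (.inr i)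
  have hx₀ (i : ι) (h : a i ≠ 0) : 0 < x i := hsupp (.inl (.inl i)) h
  have hneg (i : ι) (h : b i ≠ 0) : (M *ᵥ x) i < 0 :=
    negPart_pos_iff.1 (hsupp (.inl (.inr i)) h)
  have hpos (i : ι) (h : c i ≠ 0) : 0 < (M *ᵥ x) i :=
    posPart_pos_iff.1 (hsupp (.inr (.inl i)) h)
  have hx₁ (i : ι) (h : d i ≠ 0) : x i < 1 := sub_pos.1 (hsupp (.inr (.inr i)) h)
  refine ⟨a, fun ha => hg0 ?_, fun i hai => ?_⟩
  · subst ha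
    -- now `c = b`, and a common nonzero entry would force `(M x)ᵢ < 0 < (M x)ᵢ`
    have hcb (i : ι) : c i = b i := by simpa [sub_eq_zero] using hrow₁ i
    have hb (i : ι) : b i = 0 := by
      by_contra h
      exact (hneg i h).not_gt (hpos i (hcb i ▸ h))
    ext ((i | i) | (i | i))
    · rfl
    · exact hb i
    · exact (hcb i).trans (hb i)
    · simpa using hrow₂ i
  · have hfrac : x i ∈ Set.Ioo 0 1 :=
      ⟨hx₀ i hai, hx₁ i fun hd => hai (by simpa [hd] using hrow₂ i)⟩
    have hMx := hkkt i hfrac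
    have hb : b i = 0 := by_contra fun h => (hneg i h).ne hMx
    have hc : c i = 0 := by_contra fun h => (hpos i h).ne' hMx
    exact ⟨hfrac, by linarith [hrow₁ i]⟩

theorem IsMinOn.exists_card_fracSupport_lt (hM : M.IsSymm) (hx : x ∈ unitCube ι)
    (hmin : IsMinOn (fun x => x ⬝ᵥ M *ᵥ x) (unitCube ι) x) {g : (ι ⊕ ι) ⊕ (ι ⊕ ι) → ℝ}
    (hg : lcpMatrix M *ᵥ g = 0) (hsupp : ∀ j, g j ≠ 0 → 0 < lcpPoint M x j) (hg0 : g ≠ 0) :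
    ∃ x' ∈ unitCube ι, IsMinOn (fun x => x ⬝ᵥ M *ᵥ x) (unitCube ι) x' ∧
      #(fracSupport x') < #(fracSupport x) := by
  have hkkt (i : ι) (hi : x i ∈ Set.Ioo 0 1) : (M *ᵥ x) i = 0 :=
    hmin.mulVec_apply_eq_zero hM hx hi
  obtain ⟨a, ha, hdir⟩ := exists_direction_of_lcpMatrix_mulVec_eq_zero hkkt hg hsupp hg0
  have hdot (w : ι → ℝ) (hw : ∀ i, a i ≠ 0 → w i = 0) : a ⬝ᵥ w = 0 :=
    sum_eq_zero fun i _ => by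
      by_cases hai : a i = 0
      · simp [hai]
      · simp [hw i hai]
  have hax := hdot (M *ᵥ x) fun i hi => hkkt i (hdir i hi).1
  have haa := hdot (M *ᵥ a) fun i hi => (hdir i hi).2
  obtain ⟨t, hcube, hss⟩ :=
    exists_add_smul_mem_unitCube_fracSupport_ssubset hx ha fun i hi => (hdir i hi).1
  refine ⟨x + t • a, hcube, fun z hz => ?_, card_lt_card hss⟩
  simpa [hM.dotProduct_mulVec_add_smul_s3, hax, haa] using hmin hz

theorem exists_isMinOn_linearIndependent_lcpMatrix (hM : M.IsSymm) :
    ∃ x ∈ unitCube ι, IsMinOn (fun x => x ⬝ᵥ M *ᵥ x) (unitCube ι) x ∧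
      LinearIndependent ℝ fun j : {j // 0 < lcpPoint M x j} => (lcpMatrix M)ᵀ j := by
  obtain ⟨x, ⟨hx, hmin⟩, hfewest⟩ := exists_minimalFor_of_wellFoundedLT
    (fun x => x ∈ unitCube ι ∧ IsMinOn (fun x => x ⬝ᵥ M *ᵥ x) (unitCube ι) x)
    (fun x => #(fracSupport x)) (exists_isMinOn_unitCube M)
  refine ⟨x, hx, hmin, linearIndependent_transpose_subtype_of_mulVec_eq_zero
    fun g hsupp hg => by_contra fun hg0 => ?_⟩
  obtain ⟨x', hx', hmin', hlt⟩ := hmin.exists_card_fracSupport_lt hM hx hg hsupp hg0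
  exact hlt.not_ge (hfewest ⟨hx', hmin'⟩ hlt.le)

end LCP

theorem stmt3 {n : ℕ} (M : Matrix (Fin n) (Fin n) ℝ) (hsym : M.IsSymm)
    (A : Matrix (Fin n ⊕ Fin n) ((Fin n ⊕ Fin n) ⊕ (Fin n ⊕ Fin n)) ℝ)
    (hA : A = Matrix.fromBlocks
      (Matrix.fromCols (-M) (-(1 : Matrix (Fin n) (Fin n) ℝ)))
      (Matrix.fromCols (1 : Matrix (Fin n) (Fin n) ℝ) 0)
      (Matrix.fromCols (1 : Matrix (Fin n) (Fin n) ℝ) 0)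
      (Matrix.fromCols 0 (1 : Matrix (Fin n) (Fin n) ℝ)))
    (b : Fin n ⊕ Fin n → ℝ)
    (hb : b = Sum.elim (fun _ => 0) (fun _ => 1)) :
    ∃ (xb yb ub vb : Fin n → ℝ)
      (s : (Fin n ⊕ Fin n) ⊕ (Fin n ⊕ Fin n) → ℝ),
      s = Sum.elim (Sum.elim xb yb) (Sum.elim ub vb) ∧
      A *ᵥ s = b ∧
      (∀ j, 0 ≤ s j) ∧
      LinearIndependent ℝ (fun j : {j // 0 < s j} => A.transpose j.1) ∧
      ub ⬝ᵥ xb + vb ⬝ᵥ yb = 0 ∧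
      (∀ i, xb i ∈ Set.Icc (0 : ℝ) 1) ∧
      (∀ x : Fin n → ℝ, (∀ i, x i ∈ Set.Icc (0 : ℝ) 1) →
        xb ⬝ᵥ M *ᵥ xb ≤ x ⬝ᵥ M *ᵥ x) := by
  subst hA hb
  obtain ⟨x, hx, hmin, hli⟩ := exists_isMinOn_linearIndependent_lcpMatrix hsym
  exact ⟨x, (M *ᵥ x)⁻, (M *ᵥ x)⁺, 1 - x, lcpPoint M x, rfl, lcpMatrix_mulVec_lcpPoint M x,
    lcpPoint_nonneg M hx, hli, hmin.posPart_dotProduct_add_dotProduct_negPart hsym hx,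
    fun i => hx i (Set.mem_univ i), fun z hz => hmin fun i _ => hz i⟩
end

section
/- Let M be a symmetric integer n×n matrix and let L = Σ_{1≤i≤j≤n} (⌈log₂(|m_ij|+1)⌉ + 1) be its binary encoding length. Let γ = min_{x∈[0,1]ⁿ} xᵀMx. Then γ = 0 if M is copositive, and γ ≤ −2^{−(2L−1)} if M is not copositive. -/
open Matrix Finset

/-!
A minimizer `x` of `q x = xᵀ M x` over the cube `[0,1]ⁿ` is stationary in its set `S` of
fractional coordinates: `(M x)_S = 0`. Choosing a minimizer with the fewest fractional coordinates
makes the block `M_SS` nonsingular: if `M_SS v = 0` with `v ≠ 0`, then `q` is constant along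
`x + t v`, and following this line until one more coordinate reaches `0` or `1` gives a minimizer
with fewer fractional coordinates. Cramer's rule makes `det M_SS • x` integral, and `q x = ⌊x⌋ᵀ M x`
because `x = ⌊x⌋` off `S`; hence `det M_SS · γ` is an integer, and `γ < 0` forces
`γ ≤ -1 / |det M_SS|`. Finally `|det M_SS| ≤ ∏ᵢ ∑ⱼ |m_ij| ≤ ∏ (|m_ij| + 1) ≤ 2 ^ (2L - 1)`, each
off-diagonal entry of `M` occurring twice in the last product but once in `L`.
-/

section UnitCube

variable {ι : Type*}

lemma mem_Icc_zero_one_iff {x : ι → ℝ} : x ∈ Set.Icc 0 1 ↔ ∀ i, x i ∈ Set.Icc 0 1 :=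
  ⟨fun h i => ⟨h.1 i, h.2 i⟩, fun h => ⟨fun i => (h i).1, fun i => (h i).2⟩⟩

lemma eq_zero_or_eq_one_of_mem_Icc_of_notMem_Ioo {x : ℝ} (hx : x ∈ Set.Icc 0 1)
    (h : x ∉ Set.Ioo 0 1) : x = 0 ∨ x = 1 := by
  have : x ∈ Set.Icc 0 1 \ Set.Ioo 0 1 := ⟨hx, h⟩
  simpa [Set.Icc_sdiff_Ioo_same zero_le_one] using this

lemma exists_exit_time_Icc {a e : ℝ} (ha : a ∈ Set.Ioo 0 1) (he : e ≠ 0) :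
    ∃ c > 0, (a + c * e = 0 ∨ a + c * e = 1) ∧ ∀ t ∈ Set.Icc 0 c, a + t * e ∈ Set.Icc 0 1 := by
  obtain ⟨ha₀, ha₁⟩ := ha
  rcases he.lt_or_gt with he | he
  · have hc : a + -a / e * e = 0 := by field_simp; ring
    refine ⟨-a / e, div_pos_of_neg_of_neg (by linarith) he, Or.inl hc, fun t ht => ⟨?_, ?_⟩⟩
    · nlinarith [ht.2]
    · nlinarith [ht.1]
  · have hc : a + (1 - a) / e * e = 1 := by field_simp; ring
    refine ⟨(1 - a) / e, div_pos (by linarith) he, Or.inr hc, fun t ht => ⟨?_, ?_⟩⟩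
    · nlinarith [ht.1]
    · nlinarith [ht.2]

variable [Fintype ι]

noncomputable def fractionalCoords (x : ι → ℝ) : Finset ι := {i | x i ∈ Set.Ioo 0 1}

lemma floor_eq_zero_of_mem_fractionalCoords {x : ι → ℝ} {i : ι} (hi : i ∈ fractionalCoords x) :
    ⌊x i⌋ = 0 :=
  Int.floor_eq_zero_iff.mpr (Set.Ioo_subset_Ico_self (mem_filter.mp hi).2)

lemma floor_eq_of_notMem_fractionalCoords {x : ι → ℝ} (hx : x ∈ Set.Icc 0 1) {i : ι}
    (hi : i ∉ fractionalCoords x) : (⌊x i⌋ : ℝ) = x i := by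
  rcases eq_zero_or_eq_one_of_mem_Icc_of_notMem_Ioo (mem_Icc_zero_one_iff.mp hx i)
    (by simpa [fractionalCoords] using hi) with h | h <;> simp [h]

lemma exists_add_smul_mem_Icc_fractionalCoords_ssubset {x d : ι → ℝ} (hx : x ∈ Set.Icc 0 1)
    (hd : ∀ i ∉ fractionalCoords x, d i = 0) (hd₀ : d ≠ 0) :
    ∃ t : ℝ, x + t • d ∈ Set.Icc 0 1 ∧ fractionalCoords (x + t • d) ⊂ fractionalCoords x := by
  set F : Finset ι := {i | d i ≠ 0}
  have hF : F.Nonempty := by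
    obtain ⟨i, hi⟩ := Function.ne_iff.mp hd₀
    exact ⟨i, by simpa [F] using hi⟩
  have hFx : ∀ i ∈ F, x i ∈ Set.Ioo 0 1 := fun i hi => by
    by_contra h
    exact (mem_filter.mp hi).2 (hd i (by simpa [fractionalCoords] using h))
  choose! c hc_pos hc_hit hc_mem using
    fun i (hi : i ∈ F) => exists_exit_time_Icc (hFx i hi) (mem_filter.mp hi).2
  obtain ⟨i₀, hi₀, hc_min⟩ := F.exists_min_image c hF
  have hmem : x + c i₀ • d ∈ Set.Icc 0 1 := by
    refine mem_Icc_zero_one_iff.mpr fun j => ?_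
    by_cases hj : j ∈ F
    · exact hc_mem j hj _ ⟨(hc_pos i₀ hi₀).le, hc_min j hj⟩
    · have : d j = 0 := by simpa [F] using hj
      simpa [this] using mem_Icc_zero_one_iff.mp hx j
  refine ⟨c i₀, hmem, (Finset.ssubset_iff_of_subset fun j hj => ?_).mpr ⟨i₀, ?_, ?_⟩⟩
  · by_contra hj'
    simp only [fractionalCoords, mem_filter, mem_univ, true_and, Pi.add_apply, Pi.smul_apply,
      hd j hj', smul_zero, add_zero] at hj
    exact hj' (by simpa [fractionalCoords] using hj)
  · simpa [fractionalCoords] using hFx i₀ hi₀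
  · simp only [fractionalCoords, mem_filter, mem_univ, true_and, Pi.add_apply, Pi.smul_apply,
      smul_eq_mul]
    rcases hc_hit i₀ hi₀ with h | h <;> simp [h]

end UnitCube

section QuadraticForm

variable {ι : Type*} [Fintype ι]

lemma Matrix.IsSymm.dotProduct_mulVec_add_smul_s4 {R : Type*} [CommRing R] {A : Matrix ι ι R}
    (hA : A.IsSymm) (x d : ι → R) (t : R) :
    (x + t • d) ⬝ᵥ A *ᵥ (x + t • d) =
      x ⬝ᵥ A *ᵥ x + 2 * t * (d ⬝ᵥ A *ᵥ x) + t ^ 2 * (d ⬝ᵥ A *ᵥ d) := by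
  have hxd : x ⬝ᵥ A *ᵥ d = d ⬝ᵥ A *ᵥ x := by
    rw [dotProduct_mulVec, ← mulVec_transpose, hA.eq, dotProduct_comm]
  simp only [mulVec_add, mulVec_smul, dotProduct_add, add_dotProduct, smul_dotProduct,
    dotProduct_smul, smul_eq_mul, hxd]
  ring

lemma Matrix.IsSymm.dotProduct_mulVec_eq_zero_of_isLocalMin {A : Matrix ι ι ℝ} (hA : A.IsSymm)
    {x d : ι → ℝ} (h : IsLocalMin (fun t : ℝ => (x + t • d) ⬝ᵥ A *ᵥ (x + t • d)) 0) :
    d ⬝ᵥ A *ᵥ x = 0 := by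
  simp only [hA.dotProduct_mulVec_add_smul_s4] at h
  have hderiv : HasDerivAt (fun t : ℝ =>
      x ⬝ᵥ A *ᵥ x + 2 * t * (d ⬝ᵥ A *ᵥ x) + t ^ 2 * (d ⬝ᵥ A *ᵥ d)) (2 * (d ⬝ᵥ A *ᵥ x)) 0 := by
    have := (((hasDerivAt_id (0 : ℝ)).const_mul 2).mul_const (d ⬝ᵥ A *ᵥ x)).const_add
      (x ⬝ᵥ A *ᵥ x) |>.add ((hasDerivAt_pow 2 (0 : ℝ)).mul_const (d ⬝ᵥ A *ᵥ d))
    exact this.congr_deriv (by norm_num)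
  linarith [h.hasDerivAt_eq_zero hderiv]

lemma Matrix.IsSymm.mulVec_apply_eq_zero_of_isMinOn {A : Matrix ι ι ℝ} (hA : A.IsSymm)
    {x : ι → ℝ} (hx : x ∈ Set.Icc 0 1) (hmin : IsMinOn (fun y => y ⬝ᵥ A *ᵥ y) (Set.Icc 0 1) x)
    {i : ι} (hi : x i ∈ Set.Ioo 0 1) :
    (A *ᵥ x) i = 0 := by
  classical
  rw [← one_mul ((A *ᵥ x) i), ← single_dotProduct]
  refine hA.dotProduct_mulVec_eq_zero_of_isLocalMin ?_
  filter_upwards [Ioo_mem_nhds (neg_neg_iff_pos.mpr hi.1) (sub_pos.mpr hi.2)] with t ht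
  rw [zero_smul, add_zero]
  refine isMinOn_iff.mp hmin _ (mem_Icc_zero_one_iff.mpr fun j => ?_)
  by_cases hj : j = i
  · subst hj
    simp only [Pi.add_apply, Pi.smul_apply, Pi.single_eq_same, smul_eq_mul, mul_one]
    constructor <;> linarith [ht.1, ht.2]
  · simp only [Pi.add_apply, Pi.smul_apply, Pi.single_eq_of_ne hj, smul_zero, add_zero]
    exact mem_Icc_zero_one_iff.mp hx j

lemma dotProduct_eq_zero_of_support {R : Type*} [CommSemiring R] {S : Finset ι} {u v : ι → R}
    (hu : ∀ i ∉ S, u i = 0) (hv : ∀ i ∈ S, v i = 0) : u ⬝ᵥ v = 0 :=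
  Finset.sum_eq_zero fun i _ => by by_cases hi : i ∈ S <;> simp [hi, hu, hv]

lemma submatrix_mulVec_of_support {R : Type*} [CommSemiring R] (A : Matrix ι ι R) {S : Finset ι}
    {d : ι → R} (hd : ∀ j ∉ S, d j = 0) (a : S) :
    (A.submatrix Subtype.val Subtype.val *ᵥ fun b : S => d b) a = (A *ᵥ d) a := by
  simp only [mulVec, dotProduct, submatrix_apply]
  rw [Finset.sum_coe_sort S fun j => A a j * d j]
  exact Finset.sum_subset (subset_univ S) fun j _ hj => by rw [hd j hj, mul_zero]

lemma Matrix.IsSymm.exists_isMinOn_det_submatrix_ne_zero [DecidableEq ι] {A : Matrix ι ι ℝ}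
    (hA : A.IsSymm) {x₀ : ι → ℝ} (hx₀ : x₀ ∈ Set.Icc 0 1)
    (hmin₀ : IsMinOn (fun y => y ⬝ᵥ A *ᵥ y) (Set.Icc 0 1) x₀) :
    ∃ x ∈ Set.Icc 0 1, IsMinOn (fun y => y ⬝ᵥ A *ᵥ y) (Set.Icc 0 1) x ∧
      (A.submatrix (Subtype.val : fractionalCoords x → ι) Subtype.val).det ≠ 0 := by
  obtain ⟨x, ⟨hx, hmin⟩, hfewest⟩ := (measure fun y => #(fractionalCoords y)).wf.has_min
    {y | y ∈ Set.Icc 0 1 ∧ IsMinOn (fun y => y ⬝ᵥ A *ᵥ y) (Set.Icc 0 1) y} ⟨x₀, hx₀, hmin₀⟩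
  refine ⟨x, hx, hmin, fun hdet => ?_⟩
  set S := fractionalCoords x
  obtain ⟨v, hv₀, hv⟩ := exists_mulVec_eq_zero_iff.mpr hdet
  let d : ι → ℝ := fun i => if h : i ∈ S then v ⟨i, h⟩ else 0
  have hd_out : ∀ i ∉ S, d i = 0 := fun i hi => dif_neg hi
  have hdv : (fun a : S => d a) = v := funext fun a => by simp only [d, dif_pos a.2]
  have hd₀ : d ≠ 0 := fun h => hv₀ (by rw [← hdv, h]; rfl)
  have hAd : ∀ i ∈ S, (A *ᵥ d) i = 0 := fun i hi => by
    rw [← submatrix_mulVec_of_support A hd_out ⟨i, hi⟩, hdv, hv, Pi.zero_apply]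
  have hAx : ∀ i ∈ S, (A *ᵥ x) i = 0 := fun i hi =>
    hA.mulVec_apply_eq_zero_of_isMinOn hx hmin (mem_filter.mp hi).2
  obtain ⟨t, ht, hfewer⟩ := exists_add_smul_mem_Icc_fractionalCoords_ssubset hx hd_out hd₀
  have hvalue : (x + t • d) ⬝ᵥ A *ᵥ (x + t • d) = x ⬝ᵥ A *ᵥ x := by
    rw [hA.dotProduct_mulVec_add_smul_s4, dotProduct_eq_zero_of_support hd_out hAx,
      dotProduct_eq_zero_of_support hd_out hAd]
    ring
  refine hfewest (x + t • d) ⟨ht, isMinOn_iff.mpr fun y hy => ?_⟩ (card_lt_card hfewer)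
  rw [hvalue]
  exact isMinOn_iff.mp hmin y hy

lemma exists_mem_Icc_dotProduct_mulVec_neg {A : Matrix ι ι ℝ}
    {y : ι → ℝ} (hy : ∀ i, 0 ≤ y i) (hneg : y ⬝ᵥ A *ᵥ y < 0) :
    ∃ x ∈ Set.Icc 0 1, x ⬝ᵥ A *ᵥ x < 0 := by
  have hc : 0 < ‖y‖ + 1 := by positivity
  refine ⟨(‖y‖ + 1)⁻¹ • y, mem_Icc_zero_one_iff.mpr fun i => ⟨?_, ?_⟩, ?_⟩
  · exact mul_nonneg (inv_nonneg.mpr hc.le) (hy i)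
  · rw [Pi.smul_apply, smul_eq_mul, inv_mul_le_one₀ hc]
    linarith [(Real.norm_of_nonneg (hy i)).symm.trans_le (norm_le_pi_norm y i)]
  · rw [mulVec_smul, dotProduct_smul, smul_dotProduct, smul_eq_mul, smul_eq_mul, ← mul_assoc]
    exact mul_neg_of_pos_of_neg (by positivity) hneg

end QuadraticForm

section IntegerMatrix

variable {ι : Type*} [Fintype ι] [DecidableEq ι]

lemma Matrix.abs_det_le_prod_sum_abs {R : Type*} [CommRing R] [LinearOrder R]
    [IsStrictOrderedRing R] (A : Matrix ι ι R) : |A.det| ≤ ∏ i, ∑ j, |A i j| := by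
  rw [← det_transpose, det_apply', Fintype.prod_sum]
  let coe : Equiv.Perm ι ↪ (ι → ι) := ⟨(⇑), DFunLike.coe_injective⟩
  calc |∑ σ : Equiv.Perm ι, ((Equiv.Perm.sign σ : ℤ) : R) * ∏ i, Aᵀ (σ i) i|
      ≤ ∑ σ : Equiv.Perm ι, ∏ i, |A i (σ i)| := by
        refine (abs_sum_le_sum_abs _ _).trans_eq (sum_congr rfl fun σ _ => ?_)
        rw [abs_mul, abs_unit_intCast, one_mul, abs_prod]
        rfl
    _ = ∑ f ∈ univ.map coe, ∏ i, |A i (f i)| := (sum_map univ coe fun f => ∏ i, |A i (f i)|).symm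
    _ ≤ ∑ f : ι → ι, ∏ i, |A i (f i)| :=
        sum_le_univ_sum_of_nonneg fun f => prod_nonneg fun i _ => abs_nonneg _

omit [Fintype ι] [DecidableEq ι] in
lemma Finset.sum_le_prod_add_one (s : Finset ι) (a : ι → ℕ) :
    ∑ i ∈ s, a i ≤ ∏ i ∈ s, (a i + 1) := by
  classical
  induction s using Finset.induction_on with
  | empty => simp
  | insert i s hi ih =>
    rw [sum_insert hi, prod_insert hi]
    have : 1 ≤ ∏ j ∈ s, (a j + 1) := Finset.one_le_prod' fun j _ => Nat.le_add_left 1 (a j)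
    nlinarith

lemma Matrix.natAbs_det_submatrix_le (M : Matrix ι ι ℤ) (S : Finset ι) :
    (M.submatrix (Subtype.val : S → ι) Subtype.val).det.natAbs ≤
      ∏ i, ∏ j, ((M i j).natAbs + 1) := by
  have hdet := (M.submatrix (Subtype.val : S → ι) Subtype.val).abs_det_le_prod_sum_abs
  simp only [submatrix_apply, Int.abs_eq_natAbs] at hdet
  calc (M.submatrix (Subtype.val : S → ι) Subtype.val).det.natAbs
      ≤ ∏ a : S, ∑ b : S, (M a b).natAbs := by exact_mod_cast hdet
    _ ≤ ∏ a : S, ∏ j, ((M a j).natAbs + 1) := prod_le_prod' fun a _ => calc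
        ∑ b : S, (M a b).natAbs = ∑ j ∈ S, (M a j).natAbs := sum_coe_sort S fun j => (M a j).natAbs
        _ ≤ ∑ j, (M a j).natAbs := sum_le_univ_sum_of_nonneg fun _ => Nat.zero_le _
        _ ≤ ∏ j, ((M a j).natAbs + 1) := sum_le_prod_add_one _ _
    _ ≤ ∏ i, ∏ j, ((M i j).natAbs + 1) := by
        rw [Finset.prod_coe_sort S fun i => ∏ j, ((M i j).natAbs + 1)]
        exact prod_le_prod_of_subset_of_one_le' (subset_univ S)
          fun i _ _ => one_le_prod' fun j _ => Nat.le_add_left 1 _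

omit [Fintype ι] [DecidableEq ι] in
lemma Finset.prod_le_two_pow_sum_clog (s : Finset ι) (a : ι → ℕ) :
    ∏ i ∈ s, a i ≤ 2 ^ ∑ i ∈ s, Nat.clog 2 (a i) := by
  rw [← prod_pow_eq_pow_sum]
  exact prod_le_prod' fun i _ => Nat.le_pow_clog one_lt_two _

lemma Finset.sum_sum_le_two_mul_sum_sum_filter_le {α : Type*} [Fintype α] [LinearOrder α]
    (f : α → α → ℕ) (hf : ∀ i j, f i j = f j i) :
    ∑ i, ∑ j, f i j ≤ 2 * ∑ i, ∑ j ∈ univ.filter (fun j => i ≤ j), f i j := by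
  let g : α → α → ℕ := fun i j => if i ≤ j then f i j else 0
  calc ∑ i, ∑ j, f i j ≤ ∑ i, ∑ j, (g i j + g j i) :=
        sum_le_sum fun i _ => sum_le_sum fun j _ => by
          by_cases h : i ≤ j
          · simp [g, h]
          · simp [g, h, (not_le.mp h).le, hf i j]
    _ = 2 * ∑ i, ∑ j, g i j := by
        have hswap : ∑ i, ∑ j, g j i = ∑ i, ∑ j, g i j := sum_comm
        simp only [sum_add_distrib, hswap, two_mul]
    _ = 2 * ∑ i, ∑ j ∈ univ.filter (fun j => i ≤ j), f i j := by
        simp only [g, sum_filter]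

lemma sum_sum_clog_add_two_mul_le_encodingLength {n : ℕ} {M : Matrix (Fin n) (Fin n) ℤ}
    (hM : M.IsSymm) :
    ∑ i, ∑ j, Nat.clog 2 ((M i j).natAbs + 1) + 2 * n ≤ 2 * encodingLength M := by
  have hsum := sum_sum_le_two_mul_sum_sum_filter_le (fun i j => Nat.clog 2 ((M i j).natAbs + 1))
    fun i j => by rw [hM.apply i j]
  have hcard : n ≤ ∑ i : Fin n, #(univ.filter fun j => i ≤ j) := calc
    n = ∑ _i : Fin n, 1 := by simp
    _ ≤ _ := sum_le_sum fun i _ => card_pos.mpr ⟨i, by simp⟩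
  simp only [encodingLength, sum_add_distrib, sum_const, smul_eq_mul, mul_one]
  omega

lemma abs_det_submatrix_le_two_zpow {n : ℕ} (hn : 0 < n) {M : Matrix (Fin n) (Fin n) ℤ}
    (hM : M.IsSymm) (S : Finset (Fin n)) :
    |((M.submatrix (Subtype.val : S → Fin n) Subtype.val).det : ℝ)| ≤
      2 ^ (2 * (encodingLength M : ℤ) - 1) := by
  set c := ∑ i, ∑ j, Nat.clog 2 ((M i j).natAbs + 1)
  have hc : (c : ℤ) ≤ 2 * (encodingLength M : ℤ) - 1 := by
    have := sum_sum_clog_add_two_mul_le_encodingLength hM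
    omega
  have hprod : ∏ i, ∏ j, ((M i j).natAbs + 1) ≤ 2 ^ c := calc
    _ ≤ ∏ i, 2 ^ ∑ j, Nat.clog 2 ((M i j).natAbs + 1) :=
        prod_le_prod' fun i _ => prod_le_two_pow_sum_clog _ _
    _ = 2 ^ c := prod_pow_eq_pow_sum _ _ _
  calc |((M.submatrix (Subtype.val : S → Fin n) Subtype.val).det : ℝ)|
      = ((M.submatrix (Subtype.val : S → Fin n) Subtype.val).det.natAbs : ℝ) := by
        rw [Nat.cast_natAbs, Int.cast_abs]
    _ ≤ ((2 ^ c : ℕ) : ℝ) := by exact_mod_cast (M.natAbs_det_submatrix_le S).trans hprod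
    _ = (2 : ℝ) ^ (c : ℤ) := by rw [zpow_natCast]; push_cast; rfl
    _ ≤ 2 ^ (2 * (encodingLength M : ℤ) - 1) := zpow_le_zpow_right₀ one_le_two hc

end IntegerMatrix

section Integrality

variable {ι : Type*} [Fintype ι] [DecidableEq ι]

omit [Fintype ι] [DecidableEq ι] in
lemma Int.cast_mulVec_apply {κ R : Type*} [Fintype κ] [Ring R] (M : Matrix ι κ ℤ) (v : κ → ℤ)
    (i : ι) : (((M *ᵥ v) i : ℤ) : R) = (M.map (↑) *ᵥ fun j => (v j : R)) i := by
  simp [mulVec, dotProduct]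

lemma exists_det_submatrix_mul_eq_intCast {M : Matrix ι ι ℤ} {x : ι → ℝ} (hx : x ∈ Set.Icc 0 1)
    (hstat : ∀ i ∈ fractionalCoords x, (M.map (↑) *ᵥ x) i = 0) (i : ι) :
    ∃ k : ℤ,
      ((M.submatrix (Subtype.val : fractionalCoords x → ι) Subtype.val).det : ℝ) * x i = k := by
  set S := fractionalCoords x
  set B := M.submatrix (Subtype.val : S → ι) Subtype.val
  by_cases hi : i ∉ S
  · exact ⟨B.det * ⌊x i⌋, by rw [Int.cast_mul, floor_eq_of_notMem_fractionalCoords hx hi]⟩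
  rw [not_not] at hi
  let b : S → ℤ := fun a => -(M *ᵥ fun j => ⌊x j⌋) a
  have hy : ∀ j ∉ S, (x - fun j => (⌊x j⌋ : ℝ)) j = 0 := fun j hj => by
    rw [Pi.sub_apply, floor_eq_of_notMem_fractionalCoords hx hj, sub_self]
  have hyS : (fun a : S => (x - fun j => (⌊x j⌋ : ℝ)) a) = fun a : S => x a := funext fun a => by
    simp [floor_eq_zero_of_mem_fractionalCoords a.2]
  have hBx : B.map (↑) *ᵥ (fun a : S => x a) = fun a => (b a : ℝ) := funext fun a => by
    rw [← submatrix_map, ← hyS, submatrix_mulVec_of_support _ hy a, mulVec_sub, Pi.sub_apply,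
      hstat a a.2, zero_sub, Int.cast_neg, Int.cast_mulVec_apply]
  have hadj : (B.det : ℝ) • (fun a : S => x a) = fun a => ((B.adjugate *ᵥ b) a : ℝ) := calc
    _ = ((B.map (↑)).adjugate * B.map (↑)) *ᵥ (fun a : S => x a) := by
        rw [adjugate_mul, smul_mulVec, one_mulVec, Int.cast_det]
    _ = _ := by
        have : (B.map ((↑) : ℤ → ℝ)).adjugate = B.adjugate.map (↑) :=
          (RingHom.map_adjugate (Int.castRingHom ℝ) B).symm
        rw [← mulVec_mulVec, hBx, this]
        exact funext fun a => (Int.cast_mulVec_apply _ _ a).symm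
  exact ⟨(B.adjugate *ᵥ b) ⟨i, hi⟩, congrFun hadj ⟨i, hi⟩⟩

lemma exists_det_submatrix_mul_dotProduct_mulVec_eq_intCast {M : Matrix ι ι ℤ} {x : ι → ℝ}
    (hx : x ∈ Set.Icc 0 1) (hstat : ∀ i ∈ fractionalCoords x, (M.map (↑) *ᵥ x) i = 0) :
    ∃ k : ℤ, ((M.submatrix (Subtype.val : fractionalCoords x → ι) Subtype.val).det : ℝ) *
      (x ⬝ᵥ M.map (↑) *ᵥ x) = k := by
  choose z hz using exists_det_submatrix_mul_eq_intCast hx hstat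
  refine ⟨(fun j => ⌊x j⌋) ⬝ᵥ M *ᵥ z, ?_⟩
  have hfloor : x ⬝ᵥ M.map (↑) *ᵥ x = (fun j => (⌊x j⌋ : ℝ)) ⬝ᵥ M.map (↑) *ᵥ x :=
    sum_congr rfl fun j _ => by
      by_cases hj : j ∈ fractionalCoords x
      · simp [hstat j hj]
      · simp [floor_eq_of_notMem_fractionalCoords hx hj]
  rw [hfloor, ← smul_eq_mul, ← dotProduct_smul, ← mulVec_smul, show _ • x = _ from funext hz]
  simp [dotProduct, Int.cast_mulVec_apply]

end Integrality

lemma le_neg_inv_abs_of_mul_eq_intCast {γ : ℝ} (hγ : γ < 0) {D K : ℤ} (h : (D : ℝ) * γ = K) :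
    γ ≤ -|(D : ℝ)|⁻¹ := by
  rcases eq_or_ne D 0 with rfl | hD
  · simpa using hγ.le
  have hK : K ≠ 0 := by
    rintro rfl
    simp [hD, hγ.ne] at h
  have hDK : 1 ≤ |(D : ℝ)| * -γ := by
    rw [← abs_of_neg hγ, ← abs_mul, h, ← Int.cast_abs]
    exact_mod_cast Int.one_le_abs hK
  have hDpos : 0 < |(D : ℝ)| := abs_pos.mpr (Int.cast_ne_zero.mpr hD)
  linarith [(inv_le_iff_one_le_mul₀' hDpos).mpr hDK]

lemma Matrix.IsSymm.le_neg_two_zpow_of_isMinOn {n : ℕ} {M : Matrix (Fin n) (Fin n) ℤ}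
    (hM : M.IsSymm) {x₀ : Fin n → ℝ} (hx₀ : x₀ ∈ Set.Icc 0 1)
    (hmin₀ : IsMinOn (fun y => y ⬝ᵥ M.map (↑) *ᵥ y) (Set.Icc 0 1) x₀)
    (hneg : x₀ ⬝ᵥ M.map (↑) *ᵥ x₀ < 0) :
    x₀ ⬝ᵥ M.map (↑) *ᵥ x₀ ≤ -(2 : ℝ) ^ (-(2 * (encodingLength M : ℤ) - 1)) := by
  have hn : 0 < n := Nat.pos_of_ne_zero (by rintro rfl; simp [dotProduct] at hneg)
  obtain ⟨x, hx, hmin, hdet⟩ := (hM.map _).exists_isMinOn_det_submatrix_ne_zero hx₀ hmin₀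
  have hvalue : x ⬝ᵥ M.map (↑) *ᵥ x = x₀ ⬝ᵥ M.map (↑) *ᵥ x₀ :=
    le_antisymm (hmin hx₀) (hmin₀ hx)
  obtain ⟨K, hK⟩ := exists_det_submatrix_mul_dotProduct_mulVec_eq_intCast hx
    fun i hi => (hM.map _).mulVec_apply_eq_zero_of_isMinOn hx hmin (mem_filter.mp hi).2
  set D := (M.submatrix (Subtype.val : fractionalCoords x → Fin n) Subtype.val).det
  have hD : 0 < |(D : ℝ)| := by rwa [abs_pos, Int.cast_det, ← submatrix_map]
  calc x₀ ⬝ᵥ M.map (↑) *ᵥ x₀ ≤ -|(D : ℝ)|⁻¹ :=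
        le_neg_inv_abs_of_mul_eq_intCast hneg (hvalue ▸ hK)
    _ ≤ -((2 : ℝ) ^ (2 * (encodingLength M : ℤ) - 1))⁻¹ :=
        neg_le_neg (inv_anti₀ hD (abs_det_submatrix_le_two_zpow hn hM _))
    _ = -(2 : ℝ) ^ (-(2 * (encodingLength M : ℤ) - 1)) := by rw [_root_.zpow_neg]

theorem stmt4 {n : ℕ} (M : Matrix (Fin n) (Fin n) ℤ) (hsym : M.IsSymm)
    (L : ℕ) (hL : L = encodingLength M) (γ : ℝ)
    (hγ : IsLeast {r : ℝ | ∃ x : Fin n → ℝ,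
      (∀ i, x i ∈ Set.Icc (0 : ℝ) 1) ∧ r = x ⬝ᵥ (M.map ((↑) : ℤ → ℝ)) *ᵥ x} γ) :
    ((∀ x : Fin n → ℝ, (∀ i, 0 ≤ x i) → 0 ≤ x ⬝ᵥ (M.map ((↑) : ℤ → ℝ)) *ᵥ x) → γ = 0) ∧
    (¬ (∀ x : Fin n → ℝ, (∀ i, 0 ≤ x i) → 0 ≤ x ⬝ᵥ (M.map ((↑) : ℤ → ℝ)) *ᵥ x) →
      γ ≤ -(2 : ℝ) ^ (-(2 * (L : ℤ) - 1))) := by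
  obtain ⟨x₀, hx₀, rfl⟩ := hγ.1
  have hmin₀ : IsMinOn (fun y => y ⬝ᵥ M.map (↑) *ᵥ y) (Set.Icc 0 1) x₀ :=
    fun y hy => hγ.2 ⟨y, mem_Icc_zero_one_iff.mp hy, rfl⟩
  refine ⟨fun hcop => ?_, fun hncop => ?_⟩
  · exact le_antisymm (by simpa using hmin₀ (Set.left_mem_Icc.mpr zero_le_one))
      (hcop x₀ fun i => (hx₀ i).1)
  · simp only [not_forall, not_le] at hncop
    obtain ⟨y, hy, hqy⟩ := hncop
    obtain ⟨x, hx, hqx⟩ := exists_mem_Icc_dotProduct_mulVec_neg hy hqy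
    subst hL
    exact hsym.le_neg_two_zpow_of_isMinOn (mem_Icc_zero_one_iff.mpr hx₀) hmin₀
      ((hmin₀ hx).trans_lt hqx)
end

section
/- Let M be a symmetric integer n×n matrix with binary encoding length L = Σ_{1≤i≤j≤n} (⌈log₂(|m_ij|+1)⌉ + 1) and d = max_{i,j} |m_ij| ≥ 1. Suppose x̄ ∈ [0,1]ⁿ satisfies x̄ᵀMx̄ ≤ −2^{−(2L−1)}. Define x* = 2^{2L−1}·x̄ and y ∈ ℝⁿ by y_j = ⌈4dn²·x*_j⌉/(4dn²). Then y has nonnegative entries and yᵀMy < 0. -/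
open Matrix Finset

/-- Bound on a bilinear form by entrywise bounds. -/
lemma quad_bound {n : ℕ} (A : Matrix (Fin n) (Fin n) ℝ) (d : ℝ)
    (hA : ∀ i j, |A i j| ≤ d) (u v : Fin n → ℝ) (U V : ℝ)
    (hU : ∀ i, |u i| ≤ U) (hV : ∀ j, |v j| ≤ V)
    (hU0 : 0 ≤ U) (hV0 : 0 ≤ V) (hd0 : 0 ≤ d) :
    |u ⬝ᵥ A *ᵥ v| ≤ (n : ℝ) ^ 2 * (d * (U * V)) := by
  have hexp : u ⬝ᵥ A *ᵥ v = ∑ i, ∑ j, u i * (A i j * v j) := by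
    simp [dotProduct, mulVec, Finset.mul_sum]
  rw [hexp]
  calc |∑ i, ∑ j, u i * (A i j * v j)|
      ≤ ∑ i, |∑ j, u i * (A i j * v j)| := Finset.abs_sum_le_sum_abs _ _
    _ ≤ ∑ i : Fin n, ∑ j : Fin n, |u i * (A i j * v j)| := by
        apply Finset.sum_le_sum
        intro i _
        exact Finset.abs_sum_le_sum_abs _ _
    _ ≤ ∑ _i : Fin n, ∑ _j : Fin n, U * (d * V) := by
        apply Finset.sum_le_sum; intro i _
        apply Finset.sum_le_sum; intro j _
        rw [abs_mul, abs_mul]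
        exact mul_le_mul (hU i) (mul_le_mul (hA i j) (hV j) (abs_nonneg _) hd0)
          (by positivity) hU0
    _ = (n : ℝ) ^ 2 * (d * (U * V)) := by
        simp [Finset.sum_const]
        ring

theorem stmt13 {n : ℕ} (M : Matrix (Fin n) (Fin n) ℤ) (hsym : M.IsSymm)
    (L d : ℕ) (hL : L = encodingLength M) (hd : d = maxAbs M) (hd1 : 1 ≤ d)
    (xb : Fin n → ℝ) (hxb : ∀ i, xb i ∈ Set.Icc (0 : ℝ) 1)
    (hneg : xb ⬝ᵥ (M.map ((↑) : ℤ → ℝ)) *ᵥ xb ≤ -(2 : ℝ) ^ (-(2 * (L : ℤ) - 1)))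
    (xs y : Fin n → ℝ)
    (hxs : xs = fun j => (2 : ℝ) ^ (2 * (L : ℤ) - 1) * xb j)
    (hy : ∀ j, y j = ⌈(4 * d * n ^ 2 : ℝ) * xs j⌉ / (4 * d * n ^ 2)) :
    (∀ j, 0 ≤ y j) ∧ y ⬝ᵥ (M.map ((↑) : ℤ → ℝ)) *ᵥ y < 0 := by
  rcases Nat.eq_zero_or_pos n with hn | hn
  · exfalso
    subst hn
    have h0 : xb ⬝ᵥ (M.map ((↑) : ℤ → ℝ)) *ᵥ xb = 0 := by
      simp [dotProduct]
    rw [h0] at hneg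
    have : (0 : ℝ) < (2 : ℝ) ^ (-(2 * (L : ℤ) - 1)) := zpow_pos (by norm_num) _
    linarith
  · set A : Matrix (Fin n) (Fin n) ℝ := M.map ((↑) : ℤ → ℝ) with hA
    have hd0 : (0 : ℝ) < (d : ℝ) := by exact_mod_cast Nat.lt_of_lt_of_le Nat.zero_lt_one hd1
    have hn0 : (0 : ℝ) < (n : ℝ) := by exact_mod_cast hn
    set c : ℝ := 4 * d * n ^ 2 with hc
    have hc0 : (0 : ℝ) < c := by positivity
    set X : ℝ := (2 : ℝ) ^ (2 * (L : ℤ) - 1) with hX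
    have hX0 : (0 : ℝ) < X := zpow_pos (by norm_num) _
    -- xs is nonnegative and bounded by X
    have hxs0 : ∀ j, 0 ≤ xs j := by
      intro j; rw [hxs]
      exact mul_nonneg hX0.le (hxb j).1
    have hxsX : ∀ j, |xs j| ≤ X := by
      intro j
      rw [abs_of_nonneg (hxs0 j), hxs]
      calc X * xb j ≤ X * 1 := by nlinarith [(hxb j).2]
        _ = X := mul_one X
    -- nonnegativity of y
    have hy0 : ∀ j, 0 ≤ y j := by
      intro j
      rw [hy j]
      apply div_nonneg _ hc0.le
      have : (0 : ℤ) ≤ ⌈c * xs j⌉ := Int.ceil_nonneg (mul_nonneg hc0.le (hxs0 j))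
      exact_mod_cast this
    refine ⟨hy0, ?_⟩
    -- the error vector
    set e : Fin n → ℝ := fun j => y j - xs j with he
    have hej : ∀ j, e j = ((⌈c * xs j⌉ : ℝ) - c * xs j) / c := by
      intro j
      rw [he]
      simp only
      rw [hy j, sub_div]
      congr 1
      field_simp
    have he0 : ∀ j, 0 ≤ e j := by
      intro j
      rw [hej j]
      apply div_nonneg _ hc0.le
      linarith [Int.le_ceil (c * xs j)]
    have he1 : ∀ j, |e j| ≤ 1 / c := by
      intro j
      rw [abs_of_nonneg (he0 j), hej j]
      gcongr
      linarith [Int.ceil_lt_add_one (c * xs j)]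
    -- entrywise bound on A
    have hAd : ∀ i j, |A i j| ≤ (d : ℝ) := by
      intro i j
      have h1 : (M i j).natAbs ≤ d := by
        rw [hd, maxAbs]
        exact Finset.le_sup (f := fun p : Fin n × Fin n => (M p.1 p.2).natAbs)
          (Finset.mem_univ (i, j))
      have h2 : |A i j| = ((M i j).natAbs : ℝ) := by
        simp [hA, Matrix.map_apply, Nat.cast_natAbs]
      rw [h2]
      exact_mod_cast h1
    -- expansion of the quadratic form
    have hy' : y = xs + e := by
      funext j; simp [he]
    have hexpand : y ⬝ᵥ A *ᵥ y =
        xs ⬝ᵥ A *ᵥ xs + xs ⬝ᵥ A *ᵥ e + e ⬝ᵥ A *ᵥ xs + e ⬝ᵥ A *ᵥ e := by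
      rw [hy']
      simp [Matrix.mulVec_add, Matrix.add_mulVec, dotProduct_add, add_dotProduct]
      ring
    -- the main term
    have hQxs : xs ⬝ᵥ A *ᵥ xs ≤ -X := by
      have hsmul : xs = X • xb := by
        funext j; rw [hxs]; simp [hX]
      have hrw : xs ⬝ᵥ A *ᵥ xs = X * (X * (xb ⬝ᵥ A *ᵥ xb)) := by
        rw [hsmul, Matrix.mulVec_smul, dotProduct_smul, smul_dotProduct]
        simp [smul_eq_mul]
      rw [hrw]
      set t : ℝ := (2 : ℝ) ^ (-(2 * (L : ℤ) - 1)) with ht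
      have hXinv : X * t = 1 := by
        rw [hX, ht, ← zpow_add₀ (by norm_num : (2:ℝ) ≠ 0)]
        simp
      have h1 : X * (xb ⬝ᵥ A *ᵥ xb) ≤ X * (-t) :=
        mul_le_mul_of_nonneg_left hneg hX0.le
      have h2 : X * (X * (xb ⬝ᵥ A *ᵥ xb)) ≤ X * (X * (-t)) :=
        mul_le_mul_of_nonneg_left h1 hX0.le
      have h4 : X * (X * (-t)) = -X := by
        calc X * (X * (-t)) = -X * (X * t) := by ring
          _ = -X * 1 := by rw [hXinv]
          _ = -X := by ring
      linarith
    -- bounds on error terms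
    have hnd : (n : ℝ) ^ 2 * ((d : ℝ) * (X * (1 / c))) = X / 4 := by
      rw [hc]; field_simp
    have hee : (n : ℝ) ^ 2 * ((d : ℝ) * ((1 / c) * (1 / c))) = 1 / (4 * c) := by
      rw [hc]; field_simp
    have hb1 : |xs ⬝ᵥ A *ᵥ e| ≤ X / 4 := by
      rw [← hnd]
      exact quad_bound A d hAd xs e X (1 / c) hxsX he1 hX0.le (by positivity) hd0.le
    have hb2 : |e ⬝ᵥ A *ᵥ xs| ≤ X / 4 := by
      have := quad_bound A d hAd e xs (1 / c) X he1 hxsX (by positivity) hX0.le hd0.le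
      calc |e ⬝ᵥ A *ᵥ xs| ≤ (n : ℝ) ^ 2 * ((d : ℝ) * ((1 / c) * X)) := this
        _ = X / 4 := by rw [← hnd]; ring
    have hb3 : |e ⬝ᵥ A *ᵥ e| ≤ 1 / (4 * c) := by
      rw [← hee]
      exact quad_bound A d hAd e e (1 / c) (1 / c) he1 he1 (by positivity) (by positivity) hd0.le
    -- X ≥ 1/2 and c ≥ 4
    have hXhalf : (1 : ℝ) / 2 ≤ X := by
      have : (2 : ℝ) ^ (-1 : ℤ) ≤ (2 : ℝ) ^ (2 * (L : ℤ) - 1) :=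
        zpow_le_zpow_right₀ (by norm_num) (by omega)
      simpa using this
    have hc4 : (4 : ℝ) ≤ c := by
      rw [hc]
      have hn1 : (1 : ℝ) ≤ (n : ℝ) := by exact_mod_cast hn
      have hd1' : (1 : ℝ) ≤ (d : ℝ) := by exact_mod_cast hd1
      nlinarith
    have h3 : 1 / (4 * c) ≤ 1 / 16 := by
      rw [div_le_div_iff₀ (by positivity) (by norm_num)]
      linarith
    rw [hexpand]
    have h1 := abs_le.mp hb1
    have h2 := abs_le.mp hb2
    have h3' := abs_le.mp hb3
    linarith [hQxs, h1.2, h2.2, h3'.2, hXhalf]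
end
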